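/- arXiv:2405.01958 — 3 statements merged into one kernel-verified Lean document; each statement's English description precedes it below -/
import Mathlib

section
/- Let θ ∈ [−1,1] and let (X₁,Y₁), (X₂,Y₂), (X₃,Y₃) be independent random vectors, each with law μ_θ. Then E[|X₁−X₂|·|Y₁−Y₂|] = 1/9 + θ²/225. -/
open MeasureTheory ProbabilityTheory Set

noncomputable def fgmMeasure (θ : ℝ) : Measure (ℝ × ℝ) :=
  (volume.restrict (Set.Icc (0 : ℝ) 1 ×ˢ Set.Icc (0 : ℝ) 1)).withDensity
    (fun p => ENNReal.ofReal (1 + θ * (2 * p.1 - 1) * (2 * p.2 - 1)))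

lemma polyint (c0 c1 c2 c3 c4 a b : ℝ) :
    ∫ x in a..b, (c0 + c1*x + c2*x^2 + c3*x^3 + c4*x^4) =
      (c0*b + c1/2*b^2 + c2/3*b^3 + c3/4*b^4 + c4/5*b^5)
        - (c0*a + c1/2*a^2 + c2/3*a^3 + c3/4*a^4 + c4/5*a^5) := by
  have h : ∀ x ∈ Set.uIcc a b,
      HasDerivAt (fun y : ℝ => c0*y + c1/2*y^2 + c2/3*y^3 + c3/4*y^4 + c4/5*y^5)
        (c0 + c1*x + c2*x^2 + c3*x^3 + c4*x^4) x := by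
    intro x _
    have h0 : HasDerivAt (fun y : ℝ => c0*y) c0 x := by
      simpa using (hasDerivAt_id x).const_mul c0
    have h1 : HasDerivAt (fun y : ℝ => c1/2*y^2) (c1*x) x := by
      have h := (hasDerivAt_pow 2 x).const_mul (c1/2)
      refine h.congr_deriv ?_ <;> push_cast <;> ring
    have h2 : HasDerivAt (fun y : ℝ => c2/3*y^3) (c2*x^2) x := by
      have h := (hasDerivAt_pow 3 x).const_mul (c2/3)
      refine h.congr_deriv ?_ <;> push_cast <;> ring
    have h3 : HasDerivAt (fun y : ℝ => c3/4*y^4) (c3*x^3) x := by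
      have h := (hasDerivAt_pow 4 x).const_mul (c3/4)
      refine h.congr_deriv ?_ <;> push_cast <;> ring
    have h4 : HasDerivAt (fun y : ℝ => c4/5*y^5) (c4*x^4) x := by
      have h := (hasDerivAt_pow 5 x).const_mul (c4/5)
      refine h.congr_deriv ?_ <;> push_cast <;> ring
    exact (((h0.add h1).add h2).add h3).add h4
  rw [intervalIntegral.integral_eq_sub_of_hasDerivAt h
    ((Continuous.intervalIntegrable (by fun_prop) a b))]

lemma intAbs {a : ℝ} (h0 : 0 ≤ a) (h1 : a ≤ 1) :
    ∫ x in (0:ℝ)..1, |x - a| = a^2 - a + 1/2 := by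
  have hc : Continuous fun x : ℝ => |x - a| := (continuous_id.sub continuous_const).abs
  rw [← intervalIntegral.integral_add_adjacent_intervals (hc.intervalIntegrable 0 a)
      (hc.intervalIntegrable a 1)]
  have e1 : ∫ x in (0:ℝ)..a, |x - a|
      = ∫ x in (0:ℝ)..a, (a + (-1)*x + 0*x^2 + 0*x^3 + 0*x^4) := by
    apply intervalIntegral.integral_congr
    intro x hx
    rw [Set.uIcc_of_le h0] at hx
    beta_reduce
    rw [abs_of_nonpos (by linarith [hx.2])]; ring
  have e2 : ∫ x in a..(1:ℝ), |x - a|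
      = ∫ x in a..(1:ℝ), ((-a) + 1*x + 0*x^2 + 0*x^3 + 0*x^4) := by
    apply intervalIntegral.integral_congr
    intro x hx
    rw [Set.uIcc_of_le h1] at hx
    beta_reduce
    rw [abs_of_nonneg (by linarith [hx.1])]; ring
  rw [e1, e2, polyint, polyint]; ring

lemma intAbsLin {a : ℝ} (h0 : 0 ≤ a) (h1 : a ≤ 1) :
    ∫ x in (0:ℝ)..1, |x - a| * (2*x - 1) = 2/3*a^3 - a^2 + 1/6 := by
  have hc : Continuous fun x : ℝ => |x - a| * (2*x - 1) := by fun_prop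
  rw [← intervalIntegral.integral_add_adjacent_intervals (hc.intervalIntegrable 0 a)
      (hc.intervalIntegrable a 1)]
  have e1 : ∫ x in (0:ℝ)..a, |x - a| * (2*x - 1)
      = ∫ x in (0:ℝ)..a, ((-a) + (2*a+1)*x + (-2)*x^2 + 0*x^3 + 0*x^4) := by
    apply intervalIntegral.integral_congr
    intro x hx
    rw [Set.uIcc_of_le h0] at hx
    beta_reduce
    rw [abs_of_nonpos (by linarith [hx.2])]; ring
  have e2 : ∫ x in a..(1:ℝ), |x - a| * (2*x - 1)
      = ∫ x in a..(1:ℝ), (a + (-(2*a)-1)*x + 2*x^2 + 0*x^3 + 0*x^4) := by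
    apply intervalIntegral.integral_congr
    intro x hx
    rw [Set.uIcc_of_le h1] at hx
    beta_reduce
    rw [abs_of_nonneg (by linarith [hx.1])]; ring
  rw [e1, e2, polyint, polyint]; ring

lemma fgm_integral (θ : ℝ) (hθ1 : -1 ≤ θ) (hθ2 : θ ≤ 1) (f : ℝ × ℝ → ℝ) (hf : Continuous f) :
    ∫ p, f p ∂(fgmMeasure θ) =
      ∫ x in (0:ℝ)..(1:ℝ), ∫ y in (0:ℝ)..(1:ℝ),
        (1 + θ * (2*x - 1) * (2*y - 1)) * f (x, y) := by
  have hcm : Measurable fun p : ℝ × ℝ => Real.toNNReal (1 + θ * (2*p.1 - 1) * (2*p.2 - 1)) := by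
    fun_prop
  have hd : (fun p : ℝ × ℝ => ENNReal.ofReal (1 + θ * (2 * p.1 - 1) * (2 * p.2 - 1)))
      = fun p => ((Real.toNNReal (1 + θ * (2*p.1 - 1) * (2*p.2 - 1)) : NNReal) : ENNReal) := rfl
  rw [fgmMeasure, hd, integral_withDensity_eq_integral_smul hcm]
  have hset : MeasurableSet (Icc (0:ℝ) 1 ×ˢ Icc (0:ℝ) 1) :=
    measurableSet_Icc.prod measurableSet_Icc
  have key : EqOn (fun p : ℝ × ℝ => Real.toNNReal (1 + θ * (2*p.1 - 1) * (2*p.2 - 1)) • f p)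
      (fun p : ℝ × ℝ => (1 + θ * (2*p.1 - 1) * (2*p.2 - 1)) * f p)
      (Icc (0:ℝ) 1 ×ˢ Icc (0:ℝ) 1) := by
    intro p hp
    obtain ⟨⟨ha0, ha1⟩, hb0, hb1⟩ := hp
    have hnn : 0 ≤ 1 + θ * (2*p.1 - 1) * (2*p.2 - 1) := by
      have huv1 : (2*p.1 - 1) * (2*p.2 - 1) ≤ 1 := by nlinarith
      have huv2 : -1 ≤ (2*p.1 - 1) * (2*p.2 - 1) := by nlinarith
      nlinarith [mul_nonneg (by linarith : (0:ℝ) ≤ 1 + θ)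
          (by linarith : (0:ℝ) ≤ 1 + (2*p.1 - 1) * (2*p.2 - 1)),
        mul_nonneg (by linarith : (0:ℝ) ≤ 1 - θ)
          (by linarith : (0:ℝ) ≤ 1 - (2*p.1 - 1) * (2*p.2 - 1))]
    beta_reduce
    rw [NNReal.smul_def, Real.coe_toNNReal _ hnn, smul_eq_mul]
  rw [setIntegral_congr_fun hset key]
  have hint : IntegrableOn (fun p : ℝ × ℝ => (1 + θ * (2*p.1 - 1) * (2*p.2 - 1)) * f p)
      (Icc (0:ℝ) 1 ×ˢ Icc (0:ℝ) 1) volume :=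
    (Continuous.continuousOn (by fun_prop)).integrableOn_compact
      (isCompact_Icc.prod isCompact_Icc)
  have hint2 : Integrable (fun p : ℝ × ℝ => (1 + θ * (2*p.1 - 1) * (2*p.2 - 1)) * f p)
      ((volume.restrict (Icc (0:ℝ) 1)).prod (volume.restrict (Icc (0:ℝ) 1))) := by
    rw [Measure.prod_restrict, ← Measure.volume_eq_prod]; exact hint
  rw [Measure.volume_eq_prod, ← Measure.prod_restrict]
  rw [MeasureTheory.integral_prod _ hint2]
  rw [MeasureTheory.integral_Icc_eq_integral_Ioc,
    ← intervalIntegral.integral_of_le zero_le_one]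
  apply intervalIntegral.integral_congr
  intro x _
  beta_reduce
  rw [MeasureTheory.integral_Icc_eq_integral_Ioc,
    ← intervalIntegral.integral_of_le zero_le_one]

lemma fgm_prob_aux (θ : ℝ) (hθ1 : -1 ≤ θ) (hθ2 : θ ≤ 1)
    (hprob : IsProbabilityMeasure (fgmMeasure θ)) :
    ∫ z : (ℝ × ℝ) × (ℝ × ℝ), |z.1.1 - z.2.1| * |z.1.2 - z.2.2|
        ∂((fgmMeasure θ).prod (fgmMeasure θ))
      = 1/9 + θ^2/225 := by
  have hSc : fgmMeasure θ (Icc (0:ℝ) 1 ×ˢ Icc (0:ℝ) 1)ᶜ = 0 := by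
    rw [fgmMeasure, withDensity_apply _ (measurableSet_Icc.prod measurableSet_Icc).compl,
      Measure.restrict_restrict (measurableSet_Icc.prod measurableSet_Icc).compl,
      compl_inter_self, Measure.restrict_empty, lintegral_zero_measure]
  have hS : ∀ᵐ p ∂(fgmMeasure θ), p ∈ Icc (0:ℝ) 1 ×ˢ Icc (0:ℝ) 1 := by
    rw [ae_iff]
    convert hSc using 2
    rfl
  have h1 : ∀ᵐ z ∂((fgmMeasure θ).prod (fgmMeasure θ)),
      z.1 ∈ Icc (0:ℝ) 1 ×ˢ Icc (0:ℝ) 1 := by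
    rw [ae_iff]
    have : {z : (ℝ × ℝ) × (ℝ × ℝ) | ¬ z.1 ∈ Icc (0:ℝ) 1 ×ˢ Icc (0:ℝ) 1}
        = (Icc (0:ℝ) 1 ×ˢ Icc (0:ℝ) 1)ᶜ ×ˢ (univ : Set (ℝ × ℝ)) := by
      ext z; simp [Set.mem_prod]
    rw [this, Measure.prod_prod, hSc, zero_mul]
  have h2 : ∀ᵐ z ∂((fgmMeasure θ).prod (fgmMeasure θ)),
      z.2 ∈ Icc (0:ℝ) 1 ×ˢ Icc (0:ℝ) 1 := by
    rw [ae_iff]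
    have : {z : (ℝ × ℝ) × (ℝ × ℝ) | ¬ z.2 ∈ Icc (0:ℝ) 1 ×ˢ Icc (0:ℝ) 1}
        = (univ : Set (ℝ × ℝ)) ×ˢ (Icc (0:ℝ) 1 ×ˢ Icc (0:ℝ) 1)ᶜ := by
      ext z; simp [Set.mem_prod]
    rw [this, Measure.prod_prod, hSc, mul_zero]
  have hF : Continuous fun z : (ℝ × ℝ) × (ℝ × ℝ) => |z.1.1 - z.2.1| * |z.1.2 - z.2.2| := by
    fun_prop
  have hInt : Integrable (fun z : (ℝ × ℝ) × (ℝ × ℝ) => |z.1.1 - z.2.1| * |z.1.2 - z.2.2|)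
      ((fgmMeasure θ).prod (fgmMeasure θ)) := by
    apply Integrable.mono' (integrable_const (1:ℝ)) hF.aestronglyMeasurable
    filter_upwards [h1, h2] with z hz1 hz2
    obtain ⟨⟨ha0, ha1⟩, hb0, hb1⟩ := hz1
    obtain ⟨⟨hc0, hc1⟩, hd0, hd1⟩ := hz2
    rw [Real.norm_eq_abs, abs_of_nonneg (mul_nonneg (abs_nonneg _) (abs_nonneg _))]
    have e1 : |z.1.1 - z.2.1| ≤ 1 := abs_le.mpr ⟨by linarith, by linarith⟩
    have e2 : |z.1.2 - z.2.2| ≤ 1 := abs_le.mpr ⟨by linarith, by linarith⟩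
    nlinarith [abs_nonneg (z.1.1 - z.2.1), abs_nonneg (z.1.2 - z.2.2)]
  rw [MeasureTheory.integral_prod _ hInt]
  have hGval : ∀ p ∈ Icc (0:ℝ) 1 ×ˢ Icc (0:ℝ) 1,
      (∫ q : ℝ × ℝ, |p.1 - q.1| * |p.2 - q.2| ∂(fgmMeasure θ))
        = (p.1^2 - p.1 + 1/2) * (p.2^2 - p.2 + 1/2)
          + θ * (2/3*p.1^3 - p.1^2 + 1/6) * (2/3*p.2^3 - p.2^2 + 1/6) := by
    rintro p ⟨⟨ha0, ha1⟩, hb0, hb1⟩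
    rw [fgm_integral θ hθ1 hθ2 _ (by fun_prop)]
    have inner : ∀ x : ℝ,
        ∫ y in (0:ℝ)..1, (1 + θ * (2*x - 1) * (2*y - 1)) * (|p.1 - x| * |p.2 - y|)
          = |p.1 - x| * (p.2^2 - p.2 + 1/2)
            + (θ * (2*x - 1) * |p.1 - x|) * (2/3*p.2^3 - p.2^2 + 1/6) := by
      intro x
      rw [intervalIntegral.integral_congr
          (g := fun y => |p.1 - x| * |y - p.2|
            + (θ * (2*x - 1) * |p.1 - x|) * (|y - p.2| * (2*y - 1)))
          (fun y _ => by beta_reduce; rw [abs_sub_comm p.2 y]; ring),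
        intervalIntegral.integral_add
          ((by fun_prop : Continuous fun y : ℝ => |p.1 - x| * |y - p.2|).intervalIntegrable 0 1)
          ((by fun_prop : Continuous fun y : ℝ =>
            (θ * (2*x - 1) * |p.1 - x|) * (|y - p.2| * (2*y - 1))).intervalIntegrable 0 1),
        intervalIntegral.integral_const_mul, intervalIntegral.integral_const_mul,
        intAbs hb0 hb1, intAbsLin hb0 hb1]
    rw [intervalIntegral.integral_congr (g := fun x => |p.1 - x| * (p.2^2 - p.2 + 1/2)
          + (θ * (2*x - 1) * |p.1 - x|) * (2/3*p.2^3 - p.2^2 + 1/6))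
        (fun x _ => inner x),
      intervalIntegral.integral_congr
        (g := fun x => (p.2^2 - p.2 + 1/2) * |x - p.1|
          + (θ * (2/3*p.2^3 - p.2^2 + 1/6)) * (|x - p.1| * (2*x - 1)))
        (fun x _ => by beta_reduce; rw [abs_sub_comm p.1 x]; ring),
      intervalIntegral.integral_add
        ((by fun_prop : Continuous fun x : ℝ =>
          (p.2^2 - p.2 + 1/2) * |x - p.1|).intervalIntegrable 0 1)
        ((by fun_prop : Continuous fun x : ℝ =>
          (θ * (2/3*p.2^3 - p.2^2 + 1/6)) * (|x - p.1| * (2*x - 1))).intervalIntegrable 0 1),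
      intervalIntegral.integral_const_mul, intervalIntegral.integral_const_mul,
      intAbs ha0 ha1, intAbsLin ha0 ha1]
    ring
  rw [integral_congr_ae (g := fun p : ℝ × ℝ => (p.1^2 - p.1 + 1/2) * (p.2^2 - p.2 + 1/2)
      + θ * (2/3*p.1^3 - p.1^2 + 1/6) * (2/3*p.2^3 - p.2^2 + 1/6))
    (by filter_upwards [hS] with p hp using hGval p hp)]
  rw [fgm_integral θ hθ1 hθ2 _ (by fun_prop)]
  rw [intervalIntegral.integral_congr
      (g := fun x => (1/6 + 1/90*θ^2) + (-1/3 - 1/45*θ^2)*x + (1/3 - 1/15*θ^2)*x^2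
        + (8/45*θ^2)*x^3 + (-4/45*θ^2)*x^4)
      (fun x _ => by
        beta_reduce
        rw [intervalIntegral.integral_congr
            (g := fun y =>
              (1/4 + 5/18*θ + 1/36*θ^2 + (-1/2)*x + (-1)*x*θ + (-1/18)*x*θ^2 + 1/2*x^2
                + 4/3*x^2*θ + (-1/6)*x^2*θ^2 + (-8/9)*x^3*θ + 4/9*x^3*θ^2 + (-2/9)*x^4*θ^2)
              + (-1/2 - θ - 1/18*θ^2 + x + 4*x*θ + 1/9*x*θ^2 - x^2 - 6*x^2*θ + 1/3*x^2*θ^2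
                + 4*x^3*θ - 8/9*x^3*θ^2 + 4/9*x^4*θ^2)*y
              + (1/2 + 4/3*θ - 1/6*θ^2 - x - 6*x*θ + 1/3*x*θ^2 + x^2 + 10*x^2*θ + x^2*θ^2
                - 20/3*x^3*θ - 8/3*x^3*θ^2 + 4/3*x^4*θ^2)*y^2
              + (-8/9*θ + 4/9*θ^2 + 4*x*θ - 8/9*x*θ^2 - 20/3*x^2*θ - 8/3*x^2*θ^2
                + 40/9*x^3*θ + 64/9*x^3*θ^2 - 32/9*x^4*θ^2)*y^3
              + (-2/9*θ^2 + 4/9*x*θ^2 + 4/3*x^2*θ^2 - 32/9*x^3*θ^2 + 16/9*x^4*θ^2)*y^4)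
            (fun y _ => by beta_reduce; ring),
          polyint]
        ring),
    polyint]
  ring

theorem fgm_expectation_absdiff_prod
    {Ω : Type*} [MeasurableSpace Ω] (μ : Measure Ω) [IsProbabilityMeasure μ]
    (θ : ℝ) (hθ : θ ∈ Set.Icc (-1 : ℝ) 1)
    (Z : Fin 3 → Ω → ℝ × ℝ) (hmeas : ∀ i, Measurable (Z i))
    (hindep : iIndepFun Z μ)
    (hlaw : ∀ i, μ.map (Z i) = fgmMeasure θ) :
    ∫ ω, |(Z 0 ω).1 - (Z 1 ω).1| * |(Z 0 ω).2 - (Z 1 ω).2| ∂μ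
      = 1 / 9 + θ ^ 2 / 225 := by
  obtain ⟨hθ1, hθ2⟩ := hθ
  have hprob : IsProbabilityMeasure (fgmMeasure θ) := by
    rw [← hlaw 0]; exact Measure.isProbabilityMeasure_map (hmeas 0).aemeasurable
  have hpair : Measurable fun ω => (Z 0 ω, Z 1 ω) := (hmeas 0).prodMk (hmeas 1)
  have hind : IndepFun (Z 0) (Z 1) μ := hindep.indepFun (by decide)
  have hmap : μ.map (fun ω => (Z 0 ω, Z 1 ω)) = (fgmMeasure θ).prod (fgmMeasure θ) := by
    have h := (indepFun_iff_map_prod_eq_prod_map_map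
      (hmeas 0).aemeasurable (hmeas 1).aemeasurable).mp hind
    rw [hlaw 0, hlaw 1] at h
    exact h
  have hF : Continuous fun z : (ℝ × ℝ) × (ℝ × ℝ) => |z.1.1 - z.2.1| * |z.1.2 - z.2.2| := by
    fun_prop
  have key := integral_map (μ := μ) hpair.aemeasurable hF.aestronglyMeasurable
  rw [hmap] at key
  rw [← key]
  exact fgm_prob_aux θ hθ1 hθ2 hprob
end

section
/- Let θ ∈ [−1,1] and let (X,Y) have law μ_θ. Then the squared distance correlation of X and Y equals dCov²(X,Y)/√(dVar(X)·dVar(Y)) = θ²/10; equivalently, the distance correlation of X and Y is |θ|/√10. -/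
open MeasureTheory ProbabilityTheory Set intervalIntegral
open scoped NNReal ENNReal

/-- The squared distance covariance of the pair `(X,Y)`, expressed through three
independent copies `Z 0, Z 1, Z 2` of `(X,Y)`:
`dCov²(X,Y) = E[|X₁−X₂|·|Y₁−Y₂|] + E[|X₁−X₂|]·E[|Y₁−Y₂|] − 2·E[|X₁−X₂|·|Y₁−Y₃|]`. -/
noncomputable def dCov2 {Ω : Type*} [MeasurableSpace Ω] (μ : Measure Ω)
    (Z : Fin 3 → Ω → ℝ × ℝ) : ℝ :=
  (∫ ω, |(Z 0 ω).1 - (Z 1 ω).1| * |(Z 0 ω).2 - (Z 1 ω).2| ∂μ)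
    + (∫ ω, |(Z 0 ω).1 - (Z 1 ω).1| ∂μ) * (∫ ω, |(Z 0 ω).2 - (Z 1 ω).2| ∂μ)
    - 2 * ∫ ω, |(Z 0 ω).1 - (Z 1 ω).1| * |(Z 0 ω).2 - (Z 2 ω).2| ∂μ

/-- The squared distance variance `dVar(X) = dCov²(X,X)`, expressed through three
independent copies `X₁ = (Z 0).1, X₂ = (Z 1).1, X₃ = (Z 2).1` of `X`. -/
noncomputable def dVarFst {Ω : Type*} [MeasurableSpace Ω] (μ : Measure Ω)
    (Z : Fin 3 → Ω → ℝ × ℝ) : ℝ :=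
  dCov2 μ (fun i ω => ((Z i ω).1, (Z i ω).1))

/-- The squared distance variance `dVar(Y) = dCov²(Y,Y)` of the second component. -/
noncomputable def dVarSnd {Ω : Type*} [MeasurableSpace Ω] (μ : Measure Ω)
    (Z : Fin 3 → Ω → ℝ × ℝ) : ℝ :=
  dCov2 μ (fun i ω => ((Z i ω).2, (Z i ω).2))

noncomputable def Ume : Measure ℝ := volume.restrict (Set.Icc (0:ℝ) 1)

instance U_prob : IsProbabilityMeasure Ume := ⟨by simp [Ume, Real.volume_Icc]⟩

lemma U_eq_ii (f : ℝ → ℝ) : ∫ x, f x ∂Ume = ∫ x in (0:ℝ)..1, f x := by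
  rw [intervalIntegral.integral_of_le (by norm_num : (0:ℝ) ≤ 1)]
  show ∫ x in Set.Icc (0:ℝ) 1, f x = _
  rw [MeasureTheory.integral_Icc_eq_integral_Ioc]

lemma integral_quartic (a b c d e p q : ℝ) :
    ∫ t in p..q, (a*t^4 + b*t^3 + c*t^2 + d*t + e) =
      (a/5*q^5 + b/4*q^4 + c/3*q^3 + d/2*q^2 + e*q)
        - (a/5*p^5 + b/4*p^4 + c/3*p^3 + d/2*p^2 + e*p) := by
  have h : ∀ x ∈ Set.uIcc p q,
      HasDerivAt (fun t => a/5*t^5 + b/4*t^4 + c/3*t^3 + d/2*t^2 + e*t)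
        (a*x^4 + b*x^3 + c*x^2 + d*x + e) x := by
    intro x _
    have h1 := (((((hasDerivAt_pow 5 x).const_mul (a/5)).add
      ((hasDerivAt_pow 4 x).const_mul (b/4))).add
      ((hasDerivAt_pow 3 x).const_mul (c/3))).add
      ((hasDerivAt_pow 2 x).const_mul (d/2))).add ((hasDerivAt_id x).const_mul e)
    exact h1.congr_deriv (by push_cast; ring)
  rw [intervalIntegral.integral_eq_sub_of_hasDerivAt h (by apply Continuous.intervalIntegrable; fun_prop)]

lemma F1 {x : ℝ} (hx : x ∈ Set.Icc (0:ℝ) 1) : ∫ t, |x - t| ∂Ume = x^2 - x + 1/2 := by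
  obtain ⟨h0, h1⟩ := hx
  rw [U_eq_ii]
  have hi : ∀ u v : ℝ, IntervalIntegrable (fun t => |x - t|) volume u v := by
    intro u v; apply Continuous.intervalIntegrable; fun_prop
  rw [← intervalIntegral.integral_add_adjacent_intervals (hi 0 x) (hi x 1)]
  have e1 : ∫ t in (0:ℝ)..x, |x - t| = ∫ t in (0:ℝ)..x, (x - t) := by
    apply intervalIntegral.integral_congr
    intro t ht
    rw [Set.uIcc_of_le h0] at ht
    exact abs_of_nonneg (by linarith [ht.2])
  have e2 : ∫ t in x..(1:ℝ), |x - t| = ∫ t in x..(1:ℝ), (t - x) := by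
    apply intervalIntegral.integral_congr
    intro t ht
    rw [Set.uIcc_of_le h1] at ht
    show |x - t| = t - x
    rw [abs_sub_comm]
    exact abs_of_nonneg (by linarith [ht.1])
  have p1 : ∫ t in (0:ℝ)..x, (x - t) = ∫ t in (0:ℝ)..x, ((0:ℝ)*t^4 + 0*t^3 + 0*t^2 + (-1)*t + x) := by
    apply intervalIntegral.integral_congr; intro t _; ring
  have p2 : ∫ t in x..(1:ℝ), (t - x) = ∫ t in x..(1:ℝ), ((0:ℝ)*t^4 + 0*t^3 + 0*t^2 + 1*t + (-x)) := by
    apply intervalIntegral.integral_congr; intro t _; ring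
  rw [e1, e2, p1, p2, integral_quartic, integral_quartic]
  ring

lemma F2 {x : ℝ} (hx : x ∈ Set.Icc (0:ℝ) 1) :
    ∫ t, |x - t| * (2*t - 1) ∂Ume = 2/3*x^3 - x^2 + 1/6 := by
  obtain ⟨h0, h1⟩ := hx
  rw [U_eq_ii]
  have hi : ∀ u v : ℝ, IntervalIntegrable (fun t => |x - t| * (2*t - 1)) volume u v := by
    intro u v; apply Continuous.intervalIntegrable; fun_prop
  rw [← intervalIntegral.integral_add_adjacent_intervals (hi 0 x) (hi x 1)]
  have e1 : ∫ t in (0:ℝ)..x, |x - t| * (2*t - 1)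
      = ∫ t in (0:ℝ)..x, ((0:ℝ)*t^4 + 0*t^3 + (-2)*t^2 + (2*x+1)*t + (-x)) := by
    apply intervalIntegral.integral_congr
    intro t ht
    rw [Set.uIcc_of_le h0] at ht
    show |x - t| * (2*t - 1) = _
    rw [abs_of_nonneg (by linarith [ht.2] : (0:ℝ) ≤ x - t)]
    ring
  have e2 : ∫ t in x..(1:ℝ), |x - t| * (2*t - 1)
      = ∫ t in x..(1:ℝ), ((0:ℝ)*t^4 + 0*t^3 + 2*t^2 + (-(2*x+1))*t + x) := by
    apply intervalIntegral.integral_congr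
    intro t ht
    rw [Set.uIcc_of_le h1] at ht
    show |x - t| * (2*t - 1) = _
    rw [abs_sub_comm, abs_of_nonneg (by linarith [ht.1] : (0:ℝ) ≤ t - x)]
    ring
  rw [e1, e2, integral_quartic, integral_quartic]
  ring

lemma FQ (x : ℝ) : ∫ t, |x - t| * |x - t| ∂Ume = x^2 - x + 1/3 := by
  rw [U_eq_ii]
  have e1 : ∫ t in (0:ℝ)..1, |x - t| * |x - t|
      = ∫ t in (0:ℝ)..1, ((0:ℝ)*t^4 + 0*t^3 + 1*t^2 + (-(2*x))*t + x^2) := by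
    apply intervalIntegral.integral_congr
    intro t _
    show |x - t| * |x - t| = _
    rw [abs_mul_abs_self]
    ring
  rw [e1, integral_quartic]
  ring

-- outer polynomial integrals over Ume
lemma U_poly (a b c d e : ℝ) :
    ∫ x, (a*x^4 + b*x^3 + c*x^2 + d*x + e) ∂Ume = a/5 + b/4 + c/3 + d/2 + e := by
  rw [U_eq_ii, integral_quartic]; ring

lemma U_integrable (f : ℝ → ℝ) (hf : Measurable f) (C : ℝ)
    (hb : ∀ x ∈ Set.Icc (0:ℝ) 1, |f x| ≤ C) : Integrable f Ume :=
  (integrable_const C).mono' hf.aestronglyMeasurable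
    ((ae_restrict_mem measurableSet_Icc).mono fun x hx => by
      simpa [Real.norm_eq_abs] using hb x hx)

lemma fgm_int_mul (θ : ℝ) (hθ : θ ∈ Set.Icc (-1:ℝ) 1) (u v : ℝ → ℝ)
    (hu : Measurable u) (hv : Measurable v) (Cu Cv : ℝ)
    (hbu : ∀ x ∈ Set.Icc (0:ℝ) 1, |u x| ≤ Cu) (hbv : ∀ x ∈ Set.Icc (0:ℝ) 1, |v x| ≤ Cv) :
    ∫ p, u p.1 * v p.2 ∂(fgmMeasure θ) =
      (∫ x, u x ∂Ume) * (∫ y, v y ∂Ume)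
        + θ * ((∫ x, u x * (2*x-1) ∂Ume) * (∫ y, v y * (2*y-1) ∂Ume)) := by
  have hcm : Measurable fun p : ℝ×ℝ => (1 + θ*(2*p.1-1)*(2*p.2-1)) := by fun_prop
  have hbox : MeasurableSet ((Set.Icc (0:ℝ) 1) ×ˢ (Set.Icc (0:ℝ) 1)) :=
    measurableSet_Icc.prod measurableSet_Icc
  rw [fgmMeasure,
    show (fun p : ℝ×ℝ => ENNReal.ofReal (1 + θ * (2*p.1-1)*(2*p.2-1)))
      = (fun p : ℝ×ℝ => ((Real.toNNReal (1 + θ*(2*p.1-1)*(2*p.2-1)) : ℝ≥0) : ℝ≥0∞)) from rfl,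
    integral_withDensity_eq_integral_smul hcm.real_toNNReal]
  have hstep : ∫ p in (Set.Icc (0:ℝ) 1) ×ˢ (Set.Icc (0:ℝ) 1),
        Real.toNNReal (1 + θ*(2*p.1-1)*(2*p.2-1)) • (u p.1 * v p.2)
      = ∫ p in (Set.Icc (0:ℝ) 1) ×ˢ (Set.Icc (0:ℝ) 1),
        (1 + θ*(2*p.1-1)*(2*p.2-1)) * (u p.1 * v p.2) := by
    apply setIntegral_congr_fun hbox
    intro p hp
    obtain ⟨⟨hx0, hx1⟩, ⟨hy0, hy1⟩⟩ := hp
    have hth : |θ| ≤ 1 := abs_le.mpr ⟨hθ.1, hθ.2⟩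
    have ha : |2*p.1-1| ≤ 1 := abs_le.mpr ⟨by linarith, by linarith⟩
    have hb : |2*p.2-1| ≤ 1 := abs_le.mpr ⟨by linarith, by linarith⟩
    have key : |θ * (2*p.1-1) * (2*p.2-1)| ≤ 1 := by
      rw [abs_mul, abs_mul]
      exact mul_le_one₀ (mul_le_one₀ hth (abs_nonneg _) ha) (abs_nonneg _) hb
    have hnn : (0:ℝ) ≤ 1 + θ*(2*p.1-1)*(2*p.2-1) := by
      have := neg_abs_le (θ * (2*p.1-1) * (2*p.2-1)); linarith
    simp only [NNReal.smul_def, Real.coe_toNNReal _ hnn, smul_eq_mul]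
  rw [hstep]
  have hUU : (volume : Measure (ℝ×ℝ)).restrict ((Set.Icc (0:ℝ) 1) ×ˢ (Set.Icc (0:ℝ) 1))
      = Ume.prod Ume := by
    rw [Ume, Measure.prod_restrict, ← Measure.volume_eq_prod]
  show ∫ p, (1 + θ*(2*p.1-1)*(2*p.2-1)) * (u p.1 * v p.2)
      ∂((volume : Measure (ℝ×ℝ)).restrict ((Set.Icc (0:ℝ) 1) ×ˢ (Set.Icc (0:ℝ) 1))) = _
  rw [hUU]
  have hui : Integrable u Ume := U_integrable u hu Cu hbu
  have hvi : Integrable v Ume := U_integrable v hv Cv hbv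
  have hCu : 0 ≤ Cu := le_trans (abs_nonneg _) (hbu 0 (by norm_num))
  have hua : Integrable (fun x => u x * (2*x-1)) Ume := by
    apply U_integrable _ (by fun_prop) Cu
    intro x hx
    rw [abs_mul]
    calc |u x| * |2*x-1| ≤ Cu * 1 := by
          apply mul_le_mul (hbu x hx) _ (abs_nonneg _) hCu
          rw [abs_le]; exact ⟨by linarith [hx.1], by linarith [hx.2]⟩
      _ = Cu := mul_one Cu
  have hCv : 0 ≤ Cv := le_trans (abs_nonneg _) (hbv 0 (by norm_num))
  have hva : Integrable (fun y => v y * (2*y-1)) Ume := by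
    apply U_integrable _ (by fun_prop) Cv
    intro x hx
    rw [abs_mul]
    calc |v x| * |2*x-1| ≤ Cv * 1 := by
          apply mul_le_mul (hbv x hx) _ (abs_nonneg _) hCv
          rw [abs_le]; exact ⟨by linarith [hx.1], by linarith [hx.2]⟩
      _ = Cv := mul_one Cv
  have hre : ∀ p : ℝ×ℝ, (1 + θ*(2*p.1-1)*(2*p.2-1)) * (u p.1 * v p.2)
      = u p.1 * v p.2 + θ * ((fun x => u x * (2*x-1)) p.1 * ((fun y => v y * (2*y-1)) p.2)) := by
    intro p; simp only; ring
  simp only [hre]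
  rw [integral_add (hui.mul_prod hvi) ((hua.mul_prod hva).const_mul θ),
    MeasureTheory.integral_const_mul, integral_prod_mul u v,
    integral_prod_mul (fun x => u x * (2*x-1)) (fun y => v y * (2*y-1))]

noncomputable def Hf : ℝ → ℝ := fun x => ∫ t, |x - t| ∂Ume
noncomputable def Kf : ℝ → ℝ := fun x => ∫ t, |x - t| * (2*t-1) ∂Ume

lemma Hf_meas : Measurable Hf :=
  (MeasureTheory.StronglyMeasurable.integral_prod_right (f := fun x t => |x - t|)
    (by apply Continuous.stronglyMeasurable; fun_prop)).measurable

lemma Kf_meas : Measurable Kf :=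
  (MeasureTheory.StronglyMeasurable.integral_prod_right (f := fun x t => |x - t| * (2*t-1))
    (by apply Continuous.stronglyMeasurable; fun_prop)).measurable

lemma Hf_eq {x : ℝ} (hx : x ∈ Set.Icc (0:ℝ) 1) : Hf x = x^2 - x + 1/2 := F1 hx
lemma Kf_eq {x : ℝ} (hx : x ∈ Set.Icc (0:ℝ) 1) : Kf x = 2/3*x^3 - x^2 + 1/6 := F2 hx

lemma Hf_bound : ∀ x ∈ Set.Icc (0:ℝ) 1, |Hf x| ≤ 1 := by
  intro x hx
  rw [Hf_eq hx, abs_le]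
  obtain ⟨h0, h1⟩ := hx
  constructor <;> nlinarith

lemma Kf_bound : ∀ x ∈ Set.Icc (0:ℝ) 1, |Kf x| ≤ 1 := by
  intro x hx
  rw [Kf_eq hx, abs_le]
  obtain ⟨h0, h1⟩ := hx
  constructor <;> nlinarith

lemma U_restr : Ume = volume.restrict (Set.Icc (0:ℝ) 1) := rfl

lemma intH : ∫ x, Hf x ∂Ume = 1/3 := by
  have e : ∫ x, Hf x ∂Ume = ∫ x, ((0:ℝ)*x^4 + 0*x^3 + 1*x^2 + (-1)*x + 1/2) ∂Ume := by
    rw [U_restr]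
    apply setIntegral_congr_fun measurableSet_Icc
    intro x hx
    rw [Hf_eq hx]; ring
  rw [e, U_poly]; norm_num

lemma intHa : ∫ x, Hf x * (2*x-1) ∂Ume = 0 := by
  have e : ∫ x, Hf x * (2*x-1) ∂Ume
      = ∫ x, ((0:ℝ)*x^4 + 2*x^3 + (-3)*x^2 + 2*x + (-(1/2))) ∂Ume := by
    rw [U_restr]
    apply setIntegral_congr_fun measurableSet_Icc
    intro x hx
    show Hf x * (2*x-1) = _
    rw [Hf_eq hx]; ring
  rw [e, U_poly]; norm_num

lemma intK : ∫ x, Kf x ∂Ume = 0 := by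
  have e : ∫ x, Kf x ∂Ume = ∫ x, ((0:ℝ)*x^4 + 2/3*x^3 + (-1)*x^2 + 0*x + 1/6) ∂Ume := by
    rw [U_restr]
    apply setIntegral_congr_fun measurableSet_Icc
    intro x hx
    rw [Kf_eq hx]; ring
  rw [e, U_poly]; norm_num

lemma intKa : ∫ x, Kf x * (2*x-1) ∂Ume = -(1/15) := by
  have e : ∫ x, Kf x * (2*x-1) ∂Ume
      = ∫ x, ((4/3:ℝ)*x^4 + (-(8/3))*x^3 + 1*x^2 + 1/3*x + (-(1/6))) ∂Ume := by
    rw [U_restr]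
    apply setIntegral_congr_fun measurableSet_Icc
    intro x hx
    show Kf x * (2*x-1) = _
    rw [Kf_eq hx]; ring
  rw [e, U_poly]; norm_num

lemma intH2 : ∫ x, Hf x * Hf x ∂Ume = 7/60 := by
  have e : ∫ x, Hf x * Hf x ∂Ume
      = ∫ x, ((1:ℝ)*x^4 + (-2)*x^3 + 2*x^2 + (-1)*x + 1/4) ∂Ume := by
    rw [U_restr]
    apply setIntegral_congr_fun measurableSet_Icc
    intro x hx
    show Hf x * Hf x = _
    rw [Hf_eq hx]; ring
  rw [e, U_poly]; norm_num

lemma intQ : ∫ x, (fun y => ∫ t, |y - t| * |y - t| ∂Ume) x ∂Ume = 1/6 := by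
  have e : ∫ x, (fun y => ∫ t, |y - t| * |y - t| ∂Ume) x ∂Ume
      = ∫ x, ((0:ℝ)*x^4 + 0*x^3 + 1*x^2 + (-1)*x + 1/3) ∂Ume := by
    rw [U_restr]
    apply setIntegral_congr_fun measurableSet_Icc
    intro x _
    show ∫ t, |x - t| * |x - t| ∂Ume = _
    rw [FQ]; ring
  rw [e, U_poly]; norm_num

lemma int_one : ∫ x, (1:ℝ) ∂Ume = 1 := by simp

lemma int_a1 : ∫ x, (1:ℝ) * (2*x-1) ∂Ume = 0 := by
  have e : ∫ x, (1:ℝ) * (2*x-1) ∂Ume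
      = ∫ x, ((0:ℝ)*x^4 + 0*x^3 + 0*x^2 + 2*x + (-1)) ∂Ume := by
    apply MeasureTheory.integral_congr_ae
    filter_upwards with x
    ring
  rw [e, U_poly]; norm_num

lemma int_a : ∫ x, (2*x-1) ∂Ume = 0 := by
  have := int_a1
  simpa [one_mul] using this

section FGM
variable (θ : ℝ)

lemma fgm_ae : ∀ᵐ p ∂(fgmMeasure θ), p ∈ (Set.Icc (0:ℝ) 1) ×ˢ (Set.Icc (0:ℝ) 1) :=
  (withDensity_absolutelyContinuous _ _).ae_le
    (ae_restrict_mem (measurableSet_Icc.prod measurableSet_Icc))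

lemma fgm_compl_zero :
    fgmMeasure θ (((Set.Icc (0:ℝ) 1) ×ˢ (Set.Icc (0:ℝ) 1))ᶜ) = 0 := by
  have h := fgm_ae θ
  rw [ae_iff] at h
  exact h

lemma fgm_integrable [IsFiniteMeasure (fgmMeasure θ)] (g : ℝ×ℝ → ℝ) (hg : Measurable g) (C : ℝ)
    (hb : ∀ p ∈ (Set.Icc (0:ℝ) 1) ×ˢ (Set.Icc (0:ℝ) 1), |g p| ≤ C) :
    Integrable g (fgmMeasure θ) :=
  (integrable_const C).mono' hg.aestronglyMeasurable
    ((fgm_ae θ).mono fun p hp => by simpa [Real.norm_eq_abs] using hb p hp)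

lemma fgm_int_fst (hθ : θ ∈ Set.Icc (-1:ℝ) 1) (u : ℝ → ℝ) (hu : Measurable u) (Cu : ℝ)
    (hbu : ∀ x ∈ Set.Icc (0:ℝ) 1, |u x| ≤ Cu) :
    ∫ p, u p.1 ∂(fgmMeasure θ) = ∫ x, u x ∂Ume := by
  have h := fgm_int_mul θ hθ u (fun _ => (1:ℝ)) hu measurable_const Cu 1 hbu
    (fun x _ => by norm_num)
  simpa [int_one, int_a] using h

lemma fgm_int_snd (hθ : θ ∈ Set.Icc (-1:ℝ) 1) (v : ℝ → ℝ) (hv : Measurable v) (Cv : ℝ)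
    (hbv : ∀ x ∈ Set.Icc (0:ℝ) 1, |v x| ≤ Cv) :
    ∫ p, v p.2 ∂(fgmMeasure θ) = ∫ x, v x ∂Ume := by
  have h := fgm_int_mul θ hθ (fun _ => (1:ℝ)) v measurable_const hv 1 Cv
    (fun x _ => by norm_num) hbv
  simpa [int_one, int_a] using h

end FGM

noncomputable def Qv : ℝ → ℝ := fun x => ∫ t, |x - t| * |x - t| ∂Ume

lemma Qv_meas : Measurable Qv :=
  (MeasureTheory.StronglyMeasurable.integral_prod_right (f := fun x t => |x - t| * |x - t|)
    (by apply Continuous.stronglyMeasurable; fun_prop)).measurable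

lemma Qv_eq (x : ℝ) : Qv x = x^2 - x + 1/3 := FQ x

lemma Qv_bound : ∀ x ∈ Set.Icc (0:ℝ) 1, |Qv x| ≤ 1 := by
  intro x hx
  rw [Qv_eq, abs_le]
  obtain ⟨h0, h1⟩ := hx
  constructor <;> nlinarith

lemma intQv : ∫ x, Qv x ∂Ume = 1/6 := intQ

lemma abs_diff_le1 {a b : ℝ} (ha : a ∈ Set.Icc (0:ℝ) 1) (hb : b ∈ Set.Icc (0:ℝ) 1) :
    |a - b| ≤ 1 :=
  abs_le.mpr ⟨by linarith [ha.1, hb.2], by linarith [ha.2, hb.1]⟩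

lemma abs_abs_diff_le (x : ℝ) : ∀ t ∈ Set.Icc (0:ℝ) 1, |(|x - t|)| ≤ |x| + 1 := by
  intro t ht
  rw [abs_abs, sub_eq_add_neg]
  calc |x + -t| ≤ |x| + |(-t)| := abs_add_le x (-t)
    _ ≤ |x| + 1 := by
        rw [abs_neg]
        have : |t| ≤ 1 := abs_le.mpr ⟨by linarith [ht.1], ht.2⟩
        linarith

section Triple
variable (θ : ℝ) [IsProbabilityMeasure (fgmMeasure θ)]

lemma pi_ae : ∀ᵐ z ∂((fgmMeasure θ).prod ((fgmMeasure θ).prod (fgmMeasure θ))),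
    z.1 ∈ (Set.Icc (0:ℝ) 1) ×ˢ (Set.Icc (0:ℝ) 1)
      ∧ z.2.1 ∈ (Set.Icc (0:ℝ) 1) ×ˢ (Set.Icc (0:ℝ) 1)
      ∧ z.2.2 ∈ (Set.Icc (0:ℝ) 1) ×ˢ (Set.Icc (0:ℝ) 1) := by
  set Bx : Set (ℝ×ℝ) := (Set.Icc (0:ℝ) 1) ×ˢ (Set.Icc (0:ℝ) 1) with hBx
  set nm := fgmMeasure θ with hnm
  have h0 := fgm_compl_zero θ
  have h1 : ∀ᵐ z ∂(nm.prod (nm.prod nm)), z.1 ∈ Bx := by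
    rw [ae_iff]
    refine measure_mono_null (t := Bxᶜ ×ˢ (Set.univ : Set ((ℝ×ℝ)×(ℝ×ℝ)))) ?_ ?_
    · exact fun z hz => ⟨hz, Set.mem_univ _⟩
    · rw [Measure.prod_prod, h0, zero_mul]
  have h2 : ∀ᵐ z ∂(nm.prod (nm.prod nm)), z.2.1 ∈ Bx := by
    rw [ae_iff]
    refine measure_mono_null
      (t := (Set.univ : Set (ℝ×ℝ)) ×ˢ (Bxᶜ ×ˢ (Set.univ : Set (ℝ×ℝ)))) ?_ ?_
    · exact fun z hz => ⟨Set.mem_univ _, hz, Set.mem_univ _⟩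
    · rw [Measure.prod_prod, Measure.prod_prod, h0, zero_mul, mul_zero]
  have h3 : ∀ᵐ z ∂(nm.prod (nm.prod nm)), z.2.2 ∈ Bx := by
    rw [ae_iff]
    refine measure_mono_null
      (t := (Set.univ : Set (ℝ×ℝ)) ×ˢ ((Set.univ : Set (ℝ×ℝ)) ×ˢ Bxᶜ)) ?_ ?_
    · exact fun z hz => ⟨Set.mem_univ _, Set.mem_univ _, hz⟩
    · rw [Measure.prod_prod, Measure.prod_prod, h0, mul_zero, mul_zero]
  exact h1.and (h2.and h3)

lemma triple_fubini (f g : (ℝ×ℝ) → (ℝ×ℝ) → ℝ)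
    (hfm : Measurable (fun z : (ℝ×ℝ)×(ℝ×ℝ) => f z.1 z.2))
    (hgm : Measurable (fun z : (ℝ×ℝ)×(ℝ×ℝ) => g z.1 z.2))
    (hbf : ∀ p ∈ (Set.Icc (0:ℝ) 1) ×ˢ (Set.Icc (0:ℝ) 1),
      ∀ q ∈ (Set.Icc (0:ℝ) 1) ×ˢ (Set.Icc (0:ℝ) 1), |f p q| ≤ 1)
    (hbg : ∀ p ∈ (Set.Icc (0:ℝ) 1) ×ˢ (Set.Icc (0:ℝ) 1),
      ∀ q ∈ (Set.Icc (0:ℝ) 1) ×ˢ (Set.Icc (0:ℝ) 1), |g p q| ≤ 1) :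
    ∫ z, f z.1 z.2.1 * g z.1 z.2.2 ∂((fgmMeasure θ).prod ((fgmMeasure θ).prod (fgmMeasure θ)))
      = ∫ p, (∫ q, f p q ∂(fgmMeasure θ)) * (∫ r, g p r ∂(fgmMeasure θ)) ∂(fgmMeasure θ) := by
  have hint : Integrable (fun z : (ℝ×ℝ)×((ℝ×ℝ)×(ℝ×ℝ)) => f z.1 z.2.1 * g z.1 z.2.2)
      ((fgmMeasure θ).prod ((fgmMeasure θ).prod (fgmMeasure θ))) := by
    refine (integrable_const (1:ℝ)).mono' ?_ ?_
    · exact ((hfm.comp (measurable_fst.prodMk (measurable_fst.comp measurable_snd))).mul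
        (hgm.comp (measurable_fst.prodMk
          (measurable_snd.comp measurable_snd)))).aestronglyMeasurable
    · filter_upwards [pi_ae θ] with z hz
      obtain ⟨hz1, hz2, hz3⟩ := hz
      rw [Real.norm_eq_abs, abs_mul]
      calc |f z.1 z.2.1| * |g z.1 z.2.2| ≤ 1 * 1 :=
            mul_le_mul (hbf _ hz1 _ hz2) (hbg _ hz1 _ hz3) (abs_nonneg _) zero_le_one
        _ = 1 := one_mul 1
  rw [MeasureTheory.integral_prod _ hint]
  refine integral_congr_ae (Filter.Eventually.of_forall fun p => ?_)
  exact integral_prod_mul (f p) (g p)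

lemma triple_fubini_one (f : (ℝ×ℝ) → (ℝ×ℝ) → ℝ)
    (hfm : Measurable (fun z : (ℝ×ℝ)×(ℝ×ℝ) => f z.1 z.2))
    (hbf : ∀ p ∈ (Set.Icc (0:ℝ) 1) ×ˢ (Set.Icc (0:ℝ) 1),
      ∀ q ∈ (Set.Icc (0:ℝ) 1) ×ˢ (Set.Icc (0:ℝ) 1), |f p q| ≤ 1) :
    ∫ z, f z.1 z.2.1 ∂((fgmMeasure θ).prod ((fgmMeasure θ).prod (fgmMeasure θ)))
      = ∫ p, ∫ q, f p q ∂(fgmMeasure θ) ∂(fgmMeasure θ) := by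
  have h := triple_fubini θ f (fun _ _ => (1:ℝ)) hfm measurable_const hbf
    (by intro p _ q _; norm_num)
  simpa [measure_univ] using h

end Triple

section Evals
variable (θ : ℝ)

lemma nu_abs_fst (hθ : θ ∈ Set.Icc (-1:ℝ) 1) (x : ℝ) :
    ∫ q, |x - q.1| ∂(fgmMeasure θ) = Hf x := by
  unfold Hf
  exact fgm_int_fst θ hθ (fun t => |x - t|) (by fun_prop) (|x|+1) (abs_abs_diff_le x)

lemma nu_abs_snd (hθ : θ ∈ Set.Icc (-1:ℝ) 1) (y : ℝ) :
    ∫ q, |y - q.2| ∂(fgmMeasure θ) = Hf y := by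
  unfold Hf
  exact fgm_int_snd θ hθ (fun t => |y - t|) (by fun_prop) (|y|+1) (abs_abs_diff_le y)

lemma nu_sq_fst (hθ : θ ∈ Set.Icc (-1:ℝ) 1) (x : ℝ) :
    ∫ q, |x - q.1| * |x - q.1| ∂(fgmMeasure θ) = Qv x := by
  unfold Qv
  refine fgm_int_fst θ hθ (fun t => |x - t| * |x - t|) (by fun_prop) ((|x|+1)*(|x|+1)) ?_
  intro t ht
  rw [abs_mul]
  exact mul_le_mul (abs_abs_diff_le x t ht) (abs_abs_diff_le x t ht) (abs_nonneg _)
    (by positivity)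

lemma nu_sq_snd (hθ : θ ∈ Set.Icc (-1:ℝ) 1) (y : ℝ) :
    ∫ q, |y - q.2| * |y - q.2| ∂(fgmMeasure θ) = Qv y := by
  unfold Qv
  refine fgm_int_snd θ hθ (fun t => |y - t| * |y - t|) (by fun_prop) ((|y|+1)*(|y|+1)) ?_
  intro t ht
  rw [abs_mul]
  exact mul_le_mul (abs_abs_diff_le y t ht) (abs_abs_diff_le y t ht) (abs_nonneg _)
    (by positivity)

lemma nu_prod (hθ : θ ∈ Set.Icc (-1:ℝ) 1) (p : ℝ×ℝ) :
    ∫ q, |p.1 - q.1| * |p.2 - q.2| ∂(fgmMeasure θ)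
      = Hf p.1 * Hf p.2 + θ * (Kf p.1 * Kf p.2) := by
  unfold Hf Kf
  exact fgm_int_mul θ hθ (fun t => |p.1 - t|) (fun t => |p.2 - t|) (by fun_prop) (by fun_prop)
    (|p.1|+1) (|p.2|+1) (abs_abs_diff_le p.1) (abs_abs_diff_le p.2)

lemma outer_HH (hθ : θ ∈ Set.Icc (-1:ℝ) 1) :
    ∫ p, Hf p.1 * Hf p.2 ∂(fgmMeasure θ) = 1/9 := by
  rw [fgm_int_mul θ hθ Hf Hf Hf_meas Hf_meas 1 1 Hf_bound Hf_bound, intH, intHa]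
  norm_num

lemma outer_A [IsProbabilityMeasure (fgmMeasure θ)] (hθ : θ ∈ Set.Icc (-1:ℝ) 1) :
    ∫ p, (Hf p.1 * Hf p.2 + θ * (Kf p.1 * Kf p.2)) ∂(fgmMeasure θ) = 1/9 + θ^2/225 := by
  have i1 : Integrable (fun p : ℝ×ℝ => Hf p.1 * Hf p.2) (fgmMeasure θ) := by
    refine fgm_integrable θ _ ((Hf_meas.comp measurable_fst).mul (Hf_meas.comp measurable_snd))
      1 ?_
    intro p hp
    rw [abs_mul]
    exact mul_le_one₀ (Hf_bound _ hp.1) (abs_nonneg _) (Hf_bound _ hp.2)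
  have i2 : Integrable (fun p : ℝ×ℝ => Kf p.1 * Kf p.2) (fgmMeasure θ) := by
    refine fgm_integrable θ _ ((Kf_meas.comp measurable_fst).mul (Kf_meas.comp measurable_snd))
      1 ?_
    intro p hp
    rw [abs_mul]
    exact mul_le_one₀ (Kf_bound _ hp.1) (abs_nonneg _) (Kf_bound _ hp.2)
  rw [integral_add i1 (i2.const_mul θ), MeasureTheory.integral_const_mul,
    fgm_int_mul θ hθ Hf Hf Hf_meas Hf_meas 1 1 Hf_bound Hf_bound,
    fgm_int_mul θ hθ Kf Kf Kf_meas Kf_meas 1 1 Kf_bound Kf_bound,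
    intH, intHa, intK, intKa]
  ring

lemma outer_fstH (hθ : θ ∈ Set.Icc (-1:ℝ) 1) : ∫ p, Hf p.1 ∂(fgmMeasure θ) = 1/3 := by
  rw [fgm_int_fst θ hθ Hf Hf_meas 1 Hf_bound, intH]

lemma outer_sndH (hθ : θ ∈ Set.Icc (-1:ℝ) 1) : ∫ p, Hf p.2 ∂(fgmMeasure θ) = 1/3 := by
  rw [fgm_int_snd θ hθ Hf Hf_meas 1 Hf_bound, intH]

lemma outer_fstQ (hθ : θ ∈ Set.Icc (-1:ℝ) 1) : ∫ p, Qv p.1 ∂(fgmMeasure θ) = 1/6 := by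
  rw [fgm_int_fst θ hθ Qv Qv_meas 1 Qv_bound, intQv]

lemma outer_sndQ (hθ : θ ∈ Set.Icc (-1:ℝ) 1) : ∫ p, Qv p.2 ∂(fgmMeasure θ) = 1/6 := by
  rw [fgm_int_snd θ hθ Qv Qv_meas 1 Qv_bound, intQv]

lemma outer_fstH2 (hθ : θ ∈ Set.Icc (-1:ℝ) 1) :
    ∫ p, Hf p.1 * Hf p.1 ∂(fgmMeasure θ) = 7/60 := by
  have h := fgm_int_fst θ hθ (fun x => Hf x * Hf x) (Hf_meas.mul Hf_meas) 1
    (fun x hx => by rw [abs_mul]; exact mul_le_one₀ (Hf_bound _ hx) (abs_nonneg _) (Hf_bound _ hx))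
  rw [h, intH2]

lemma outer_sndH2 (hθ : θ ∈ Set.Icc (-1:ℝ) 1) :
    ∫ p, Hf p.2 * Hf p.2 ∂(fgmMeasure θ) = 7/60 := by
  have h := fgm_int_snd θ hθ (fun x => Hf x * Hf x) (Hf_meas.mul Hf_meas) 1
    (fun x hx => by rw [abs_mul]; exact mul_le_one₀ (Hf_bound _ hx) (abs_nonneg _) (Hf_bound _ hx))
  rw [h, intH2]

end Evals

section PiEvals
variable (θ : ℝ) [IsProbabilityMeasure (fgmMeasure θ)]

lemma bnd_ff : ∀ p ∈ (Set.Icc (0:ℝ) 1) ×ˢ (Set.Icc (0:ℝ) 1),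
    ∀ q ∈ (Set.Icc (0:ℝ) 1) ×ˢ (Set.Icc (0:ℝ) 1), |(|p.1 - q.1|)| ≤ 1 := by
  intro p hp q hq
  rw [abs_abs]
  exact abs_diff_le1 hp.1 hq.1

lemma bnd_ss : ∀ p ∈ (Set.Icc (0:ℝ) 1) ×ˢ (Set.Icc (0:ℝ) 1),
    ∀ q ∈ (Set.Icc (0:ℝ) 1) ×ˢ (Set.Icc (0:ℝ) 1), |(|p.2 - q.2|)| ≤ 1 := by
  intro p hp q hq
  rw [abs_abs]
  exact abs_diff_le1 hp.2 hq.2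

lemma bnd_prod : ∀ p ∈ (Set.Icc (0:ℝ) 1) ×ˢ (Set.Icc (0:ℝ) 1),
    ∀ q ∈ (Set.Icc (0:ℝ) 1) ×ˢ (Set.Icc (0:ℝ) 1), |(|p.1 - q.1| * |p.2 - q.2|)| ≤ 1 := by
  intro p hp q hq
  rw [abs_mul, abs_abs, abs_abs]
  exact mul_le_one₀ (abs_diff_le1 hp.1 hq.1) (abs_nonneg _) (abs_diff_le1 hp.2 hq.2)

lemma bnd_sqf : ∀ p ∈ (Set.Icc (0:ℝ) 1) ×ˢ (Set.Icc (0:ℝ) 1),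
    ∀ q ∈ (Set.Icc (0:ℝ) 1) ×ˢ (Set.Icc (0:ℝ) 1), |(|p.1 - q.1| * |p.1 - q.1|)| ≤ 1 := by
  intro p hp q hq
  simp only [abs_mul, abs_abs]
  exact mul_le_one₀ (abs_diff_le1 hp.1 hq.1) (abs_nonneg _) (abs_diff_le1 hp.1 hq.1)

lemma bnd_sqs : ∀ p ∈ (Set.Icc (0:ℝ) 1) ×ˢ (Set.Icc (0:ℝ) 1),
    ∀ q ∈ (Set.Icc (0:ℝ) 1) ×ˢ (Set.Icc (0:ℝ) 1), |(|p.2 - q.2| * |p.2 - q.2|)| ≤ 1 := by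
  intro p hp q hq
  simp only [abs_mul, abs_abs]
  exact mul_le_one₀ (abs_diff_le1 hp.2 hq.2) (abs_nonneg _) (abs_diff_le1 hp.2 hq.2)

lemma evalA (hθ : θ ∈ Set.Icc (-1:ℝ) 1) :
    ∫ z, |z.1.1 - z.2.1.1| * |z.1.2 - z.2.1.2|
        ∂((fgmMeasure θ).prod ((fgmMeasure θ).prod (fgmMeasure θ)))
      = 1/9 + θ^2/225 := by
  have h := triple_fubini_one θ (fun p q => |p.1 - q.1| * |p.2 - q.2|) (by fun_prop)
    (bnd_prod)
  rw [h]
  calc ∫ p, ∫ q, |p.1 - q.1| * |p.2 - q.2| ∂(fgmMeasure θ) ∂(fgmMeasure θ)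
      = ∫ p, (Hf p.1 * Hf p.2 + θ * (Kf p.1 * Kf p.2)) ∂(fgmMeasure θ) :=
        integral_congr_ae (Filter.Eventually.of_forall fun p => nu_prod θ hθ p)
    _ = 1/9 + θ^2/225 := outer_A θ hθ

lemma evalB1 (hθ : θ ∈ Set.Icc (-1:ℝ) 1) :
    ∫ z, |z.1.1 - z.2.1.1|
        ∂((fgmMeasure θ).prod ((fgmMeasure θ).prod (fgmMeasure θ))) = 1/3 := by
  have h := triple_fubini_one θ (fun p q => |p.1 - q.1|) (by fun_prop) (bnd_ff)
  rw [h]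
  calc ∫ p, ∫ q, |p.1 - q.1| ∂(fgmMeasure θ) ∂(fgmMeasure θ)
      = ∫ p : ℝ×ℝ, Hf p.1 ∂(fgmMeasure θ) :=
        integral_congr_ae (Filter.Eventually.of_forall fun p => nu_abs_fst θ hθ p.1)
    _ = 1/3 := outer_fstH θ hθ

lemma evalB2 (hθ : θ ∈ Set.Icc (-1:ℝ) 1) :
    ∫ z, |z.1.2 - z.2.1.2|
        ∂((fgmMeasure θ).prod ((fgmMeasure θ).prod (fgmMeasure θ))) = 1/3 := by
  have h := triple_fubini_one θ (fun p q => |p.2 - q.2|) (by fun_prop) (bnd_ss)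
  rw [h]
  calc ∫ p, ∫ q, |p.2 - q.2| ∂(fgmMeasure θ) ∂(fgmMeasure θ)
      = ∫ p : ℝ×ℝ, Hf p.2 ∂(fgmMeasure θ) :=
        integral_congr_ae (Filter.Eventually.of_forall fun p => nu_abs_snd θ hθ p.2)
    _ = 1/3 := outer_sndH θ hθ

lemma evalC (hθ : θ ∈ Set.Icc (-1:ℝ) 1) :
    ∫ z, |z.1.1 - z.2.1.1| * |z.1.2 - z.2.2.2|
        ∂((fgmMeasure θ).prod ((fgmMeasure θ).prod (fgmMeasure θ))) = 1/9 := by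
  have h := triple_fubini θ (fun p q => |p.1 - q.1|) (fun p r => |p.2 - r.2|)
    (by fun_prop) (by fun_prop) (bnd_ff) (bnd_ss)
  rw [h]
  calc ∫ p, (∫ q, |p.1 - q.1| ∂(fgmMeasure θ)) * (∫ r, |p.2 - r.2| ∂(fgmMeasure θ))
          ∂(fgmMeasure θ)
      = ∫ p, Hf p.1 * Hf p.2 ∂(fgmMeasure θ) :=
        integral_congr_ae (Filter.Eventually.of_forall fun p => by
          show (∫ q, |p.1 - q.1| ∂(fgmMeasure θ)) * (∫ r, |p.2 - r.2| ∂(fgmMeasure θ))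
            = Hf p.1 * Hf p.2
          rw [nu_abs_fst θ hθ p.1, nu_abs_snd θ hθ p.2])
    _ = 1/9 := outer_HH θ hθ

lemma evalV1f (hθ : θ ∈ Set.Icc (-1:ℝ) 1) :
    ∫ z, |z.1.1 - z.2.1.1| * |z.1.1 - z.2.1.1|
        ∂((fgmMeasure θ).prod ((fgmMeasure θ).prod (fgmMeasure θ))) = 1/6 := by
  have h := triple_fubini_one θ (fun p q => |p.1 - q.1| * |p.1 - q.1|) (by fun_prop) (bnd_sqf)
  rw [h]
  calc ∫ p, ∫ q, |p.1 - q.1| * |p.1 - q.1| ∂(fgmMeasure θ) ∂(fgmMeasure θ)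
      = ∫ p : ℝ×ℝ, Qv p.1 ∂(fgmMeasure θ) :=
        integral_congr_ae (Filter.Eventually.of_forall fun p => nu_sq_fst θ hθ p.1)
    _ = 1/6 := outer_fstQ θ hθ

lemma evalV1s (hθ : θ ∈ Set.Icc (-1:ℝ) 1) :
    ∫ z, |z.1.2 - z.2.1.2| * |z.1.2 - z.2.1.2|
        ∂((fgmMeasure θ).prod ((fgmMeasure θ).prod (fgmMeasure θ))) = 1/6 := by
  have h := triple_fubini_one θ (fun p q => |p.2 - q.2| * |p.2 - q.2|) (by fun_prop) (bnd_sqs)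
  rw [h]
  calc ∫ p, ∫ q, |p.2 - q.2| * |p.2 - q.2| ∂(fgmMeasure θ) ∂(fgmMeasure θ)
      = ∫ p : ℝ×ℝ, Qv p.2 ∂(fgmMeasure θ) :=
        integral_congr_ae (Filter.Eventually.of_forall fun p => nu_sq_snd θ hθ p.2)
    _ = 1/6 := outer_sndQ θ hθ

lemma evalV3f (hθ : θ ∈ Set.Icc (-1:ℝ) 1) :
    ∫ z, |z.1.1 - z.2.1.1| * |z.1.1 - z.2.2.1|
        ∂((fgmMeasure θ).prod ((fgmMeasure θ).prod (fgmMeasure θ))) = 7/60 := by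
  have h := triple_fubini θ (fun p q => |p.1 - q.1|) (fun p r => |p.1 - r.1|)
    (by fun_prop) (by fun_prop) (bnd_ff) (bnd_ff)
  rw [h]
  calc ∫ p, (∫ q, |p.1 - q.1| ∂(fgmMeasure θ)) * (∫ r, |p.1 - r.1| ∂(fgmMeasure θ))
          ∂(fgmMeasure θ)
      = ∫ p, Hf p.1 * Hf p.1 ∂(fgmMeasure θ) :=
        integral_congr_ae (Filter.Eventually.of_forall fun p => by
          show (∫ q, |p.1 - q.1| ∂(fgmMeasure θ)) * (∫ r, |p.1 - r.1| ∂(fgmMeasure θ))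
            = Hf p.1 * Hf p.1
          rw [nu_abs_fst θ hθ p.1])
    _ = 7/60 := outer_fstH2 θ hθ

lemma evalV3s (hθ : θ ∈ Set.Icc (-1:ℝ) 1) :
    ∫ z, |z.1.2 - z.2.1.2| * |z.1.2 - z.2.2.2|
        ∂((fgmMeasure θ).prod ((fgmMeasure θ).prod (fgmMeasure θ))) = 7/60 := by
  have h := triple_fubini θ (fun p q => |p.2 - q.2|) (fun p r => |p.2 - r.2|)
    (by fun_prop) (by fun_prop) (bnd_ss) (bnd_ss)
  rw [h]
  calc ∫ p, (∫ q, |p.2 - q.2| ∂(fgmMeasure θ)) * (∫ r, |p.2 - r.2| ∂(fgmMeasure θ))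
          ∂(fgmMeasure θ)
      = ∫ p, Hf p.2 * Hf p.2 ∂(fgmMeasure θ) :=
        integral_congr_ae (Filter.Eventually.of_forall fun p => by
          show (∫ q, |p.2 - q.2| ∂(fgmMeasure θ)) * (∫ r, |p.2 - r.2| ∂(fgmMeasure θ))
            = Hf p.2 * Hf p.2
          rw [nu_abs_snd θ hθ p.2])
    _ = 7/60 := outer_sndH2 θ hθ

end PiEvals


theorem fgm_squared_distance_correlation
    {Ω : Type*} [MeasurableSpace Ω] (μ : Measure Ω) [IsProbabilityMeasure μ]
    (θ : ℝ) (hθ : θ ∈ Set.Icc (-1 : ℝ) 1)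
    (Z : Fin 3 → Ω → ℝ × ℝ) (hmeas : ∀ i, Measurable (Z i))
    (hindep : iIndepFun Z μ)
    (hlaw : ∀ i, μ.map (Z i) = fgmMeasure θ) :
    dCov2 μ Z / Real.sqrt (dVarFst μ Z * dVarSnd μ Z) = θ ^ 2 / 10 ∧
    Real.sqrt (dCov2 μ Z / Real.sqrt (dVarFst μ Z * dVarSnd μ Z))
      = |θ| / Real.sqrt 10 := by
  haveI hprob : IsProbabilityMeasure (fgmMeasure θ) := by
    have h := Measure.isProbabilityMeasure_map (μ := μ) (f := Z 0) (hmeas 0).aemeasurable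
    rwa [hlaw 0] at h
  have h12 : μ.map (fun ω => (Z 1 ω, Z 2 ω)) = (fgmMeasure θ).prod (fgmMeasure θ) := by
    have hi := hindep.indepFun (show (1:Fin 3) ≠ 2 by decide)
    rw [indepFun_iff_map_prod_eq_prod_map_map (hmeas 1).aemeasurable (hmeas 2).aemeasurable] at hi
    rw [hi, hlaw 1, hlaw 2]
  have h0 : IndepFun (Z 0) (fun ω => (Z 1 ω, Z 2 ω)) μ :=
    (hindep.indepFun_prodMk hmeas 1 2 0 (by decide) (by decide)).symm
  have htriple : μ.map (fun ω => (Z 0 ω, (Z 1 ω, Z 2 ω)))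
      = (fgmMeasure θ).prod ((fgmMeasure θ).prod (fgmMeasure θ)) := by
    rw [indepFun_iff_map_prod_eq_prod_map_map (hmeas 0).aemeasurable
      ((hmeas 1).prodMk (hmeas 2)).aemeasurable] at h0
    rw [h0, hlaw 0, h12]
  have hφ : AEMeasurable (fun ω => (Z 0 ω, (Z 1 ω, Z 2 ω))) μ :=
    ((hmeas 0).prodMk ((hmeas 1).prodMk (hmeas 2))).aemeasurable
  have key : ∀ F : (ℝ×ℝ)×((ℝ×ℝ)×(ℝ×ℝ)) → ℝ, Measurable F →
      ∫ ω, F (Z 0 ω, (Z 1 ω, Z 2 ω)) ∂μ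
        = ∫ z, F z ∂((fgmMeasure θ).prod ((fgmMeasure θ).prod (fgmMeasure θ))) := by
    intro F hF
    rw [← htriple]
    exact (integral_map hφ hF.aestronglyMeasurable).symm
  have e1 : ∫ ω, |(Z 0 ω).1 - (Z 1 ω).1| * |(Z 0 ω).2 - (Z 1 ω).2| ∂μ = 1/9 + θ^2/225 :=
    (key (fun z => |z.1.1 - z.2.1.1| * |z.1.2 - z.2.1.2|) (by fun_prop)).trans (evalA θ hθ)
  have e2 : ∫ ω, |(Z 0 ω).1 - (Z 1 ω).1| ∂μ = 1/3 :=
    (key (fun z => |z.1.1 - z.2.1.1|) (by fun_prop)).trans (evalB1 θ hθ)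
  have e3 : ∫ ω, |(Z 0 ω).2 - (Z 1 ω).2| ∂μ = 1/3 :=
    (key (fun z => |z.1.2 - z.2.1.2|) (by fun_prop)).trans (evalB2 θ hθ)
  have e4 : ∫ ω, |(Z 0 ω).1 - (Z 1 ω).1| * |(Z 0 ω).2 - (Z 2 ω).2| ∂μ = 1/9 :=
    (key (fun z => |z.1.1 - z.2.1.1| * |z.1.2 - z.2.2.2|) (by fun_prop)).trans (evalC θ hθ)
  have vf1 : ∫ ω, |(Z 0 ω).1 - (Z 1 ω).1| * |(Z 0 ω).1 - (Z 1 ω).1| ∂μ = 1/6 :=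
    (key (fun z => |z.1.1 - z.2.1.1| * |z.1.1 - z.2.1.1|) (by fun_prop)).trans (evalV1f θ hθ)
  have vf3 : ∫ ω, |(Z 0 ω).1 - (Z 1 ω).1| * |(Z 0 ω).1 - (Z 2 ω).1| ∂μ = 7/60 :=
    (key (fun z => |z.1.1 - z.2.1.1| * |z.1.1 - z.2.2.1|) (by fun_prop)).trans (evalV3f θ hθ)
  have vs1 : ∫ ω, |(Z 0 ω).2 - (Z 1 ω).2| * |(Z 0 ω).2 - (Z 1 ω).2| ∂μ = 1/6 :=
    (key (fun z => |z.1.2 - z.2.1.2| * |z.1.2 - z.2.1.2|) (by fun_prop)).trans (evalV1s θ hθ)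
  have vs3 : ∫ ω, |(Z 0 ω).2 - (Z 1 ω).2| * |(Z 0 ω).2 - (Z 2 ω).2| ∂μ = 7/60 :=
    (key (fun z => |z.1.2 - z.2.1.2| * |z.1.2 - z.2.2.2|) (by fun_prop)).trans (evalV3s θ hθ)
  have hdcov : dCov2 μ Z = θ^2/225 := by
    show (∫ ω, |(Z 0 ω).1 - (Z 1 ω).1| * |(Z 0 ω).2 - (Z 1 ω).2| ∂μ)
        + (∫ ω, |(Z 0 ω).1 - (Z 1 ω).1| ∂μ) * (∫ ω, |(Z 0 ω).2 - (Z 1 ω).2| ∂μ)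
        - 2 * (∫ ω, |(Z 0 ω).1 - (Z 1 ω).1| * |(Z 0 ω).2 - (Z 2 ω).2| ∂μ) = θ^2/225
    rw [e1, e2, e3, e4]
    ring
  have hvf : dVarFst μ Z = 2/45 := by
    show (∫ ω, |(Z 0 ω).1 - (Z 1 ω).1| * |(Z 0 ω).1 - (Z 1 ω).1| ∂μ)
        + (∫ ω, |(Z 0 ω).1 - (Z 1 ω).1| ∂μ) * (∫ ω, |(Z 0 ω).1 - (Z 1 ω).1| ∂μ)
        - 2 * (∫ ω, |(Z 0 ω).1 - (Z 1 ω).1| * |(Z 0 ω).1 - (Z 2 ω).1| ∂μ) = 2/45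
    rw [vf1, e2, vf3]
    norm_num
  have hvs : dVarSnd μ Z = 2/45 := by
    show (∫ ω, |(Z 0 ω).2 - (Z 1 ω).2| * |(Z 0 ω).2 - (Z 1 ω).2| ∂μ)
        + (∫ ω, |(Z 0 ω).2 - (Z 1 ω).2| ∂μ) * (∫ ω, |(Z 0 ω).2 - (Z 1 ω).2| ∂μ)
        - 2 * (∫ ω, |(Z 0 ω).2 - (Z 1 ω).2| * |(Z 0 ω).2 - (Z 2 ω).2| ∂μ) = 2/45
    rw [vs1, e3, vs3]
    norm_num
  rw [hdcov, hvf, hvs,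
    show (2/45 : ℝ) * (2/45) = (2/45)^2 from by norm_num,
    Real.sqrt_sq (by norm_num : (0:ℝ) ≤ 2/45),
    show (θ^2/225 : ℝ) / (2/45) = θ^2/10 from by ring]
  refine ⟨rfl, ?_⟩
  have h10 : Real.sqrt 10 ^ 2 = 10 := Real.sq_sqrt (by norm_num)
  rw [show θ^2/10 = (|θ|/Real.sqrt 10)^2 from by rw [div_pow, sq_abs, h10],
    Real.sqrt_sq (by positivity)]
end

section
/- Let n ≥ 1, let X₁, …, Xₙ ∈ ℝ^p and Y₁, …, Yₙ ∈ ℝ^q. Set a_{kl} = ‖X_k − X_l‖ and b_{kl} = ‖Y_k − Y_l‖ (Euclidean norms), and define the double-centered matrices A_{kl} = a_{kl} − (1/n)Σ_{j=1}^n a_{kj} − (1/n)Σ_{i=1}^n a_{il} + (1/n²)Σ_{i,j=1}^n a_{ij}, and similarly B_{kl} from b_{kl}. Then the empirical squared distance covariance satisfies dCov_n²(X,Y) = (1/n²)·Σ_{k,l=1}^n A_{kl}·B_{kl} ≥ 0. -/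
open Finset MeasureTheory Set

lemma qform_pow_inner_nonneg {p n : ℕ} (x : Fin n → EuclideanSpace ℝ (Fin p))
    (c : Fin n → ℝ) (m : ℕ) :
    0 ≤ ∑ k, ∑ l, c k * c l * (inner ℝ (x k) (x l) : ℝ) ^ m := by
  have hinner : ∀ k l, (inner ℝ (x k) (x l) : ℝ) = ∑ i, x k i * x l i := by
    intro k l
    simp [PiLp.inner_apply, RCLike.inner_apply, mul_comm]
  set G := Fintype.piFinset (fun _ : Fin m => (univ : Finset (Fin p))) with hG
  set u : Fin n → (Fin m → Fin p) → ℝ := fun k g => c k * ∏ j, x k (g j) with hu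
  have key : ∀ k l : Fin n, c k * c l * (inner ℝ (x k) (x l) : ℝ) ^ m
      = ∑ g ∈ G, u k g * u l g := by
    intro k l
    rw [hinner, Finset.sum_pow', Finset.mul_sum]
    refine Finset.sum_congr rfl fun g _ => ?_
    rw [hu]; simp only []
    rw [Finset.prod_mul_distrib]; ring
  calc (0:ℝ) ≤ ∑ g ∈ G, (∑ k, u k g) ^ 2 := by positivity
    _ = ∑ g ∈ G, ∑ k, ∑ l, u k g * u l g := by
        refine Finset.sum_congr rfl fun g _ => ?_
        rw [sq, Finset.sum_mul_sum]
    _ = ∑ k, ∑ g ∈ G, ∑ l, u k g * u l g := Finset.sum_comm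
    _ = ∑ k, ∑ l, ∑ g ∈ G, u k g * u l g := by
        exact Finset.sum_congr rfl fun k _ => Finset.sum_comm
    _ = ∑ k, ∑ l, c k * c l * (inner ℝ (x k) (x l) : ℝ) ^ m := by
        refine Finset.sum_congr rfl fun k _ => Finset.sum_congr rfl fun l _ => (key k l).symm

lemma gauss_qform_nonneg {p n : ℕ} (x : Fin n → EuclideanSpace ℝ (Fin p))
    (c : Fin n → ℝ) {t : ℝ} (ht : 0 ≤ t) :
    0 ≤ ∑ k, ∑ l, c k * c l * Real.exp (-(t * ‖x k - x l‖ ^ 2)) := by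
  set d : Fin n → ℝ := fun k => c k * Real.exp (-(t * ‖x k‖ ^ 2)) with hd
  have hsplit : ∀ k l, c k * c l * Real.exp (-(t * ‖x k - x l‖ ^ 2))
      = d k * d l * Real.exp (2 * t * (inner ℝ (x k) (x l) : ℝ)) := by
    intro k l
    have hns : ‖x k - x l‖ ^ 2 = ‖x k‖ ^ 2 - 2 * (inner ℝ (x k) (x l) : ℝ) + ‖x l‖ ^ 2 :=
      norm_sub_sq_real _ _
    rw [hd]; simp only []
    rw [hns]
    rw [show -(t * (‖x k‖ ^ 2 - 2 * (inner ℝ (x k) (x l):ℝ) + ‖x l‖ ^ 2))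
        = (-(t * ‖x k‖ ^ 2)) + ((-(t * ‖x l‖ ^ 2)) + 2 * t * (inner ℝ (x k) (x l):ℝ)) by ring]
    rw [Real.exp_add, Real.exp_add]
    ring
  simp only [hsplit]
  have hexp : ∀ k l, Real.exp (2 * t * (inner ℝ (x k) (x l) : ℝ))
      = ∑' m : ℕ, (2 * t * (inner ℝ (x k) (x l) : ℝ)) ^ m / m.factorial := by
    intro k l
    rw [Real.exp_eq_exp_ℝ, NormedSpace.exp_eq_tsum_div]
  have hsummable : ∀ k l : Fin n, Summable (fun m : ℕ =>
      d k * d l * ((2 * t * (inner ℝ (x k) (x l) : ℝ)) ^ m / m.factorial)) :=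
    fun k l => (Real.summable_pow_div_factorial _).mul_left _
  have hswap : ∑ k, ∑ l, d k * d l * Real.exp (2 * t * (inner ℝ (x k) (x l) : ℝ))
      = ∑' m : ℕ, ∑ k, ∑ l, d k * d l * ((2 * t * (inner ℝ (x k) (x l) : ℝ)) ^ m / m.factorial) := by
    rw [Summable.tsum_finsetSum (fun k _ => summable_sum fun l _ => hsummable k l)]
    refine Finset.sum_congr rfl fun k _ => ?_
    rw [Summable.tsum_finsetSum (fun l _ => hsummable k l)]
    refine Finset.sum_congr rfl fun l _ => ?_
    rw [hexp, ← tsum_mul_left]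
  rw [hswap]
  refine tsum_nonneg fun m => ?_
  have : ∑ k, ∑ l, d k * d l * ((2 * t * (inner ℝ (x k) (x l) : ℝ)) ^ m / m.factorial)
      = ((2 * t) ^ m / m.factorial) * ∑ k, ∑ l, d k * d l * (inner ℝ (x k) (x l) : ℝ) ^ m := by
    rw [Finset.mul_sum]
    refine Finset.sum_congr rfl fun k _ => ?_
    rw [Finset.mul_sum]
    refine Finset.sum_congr rfl fun l _ => ?_
    rw [mul_pow]; ring
  rw [this]
  have h1 : (0:ℝ) ≤ (2 * t) ^ m / m.factorial := by positivity
  exact mul_nonneg h1 (qform_pow_inner_nonneg x d m)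

lemma gfun_integrable {u : ℝ} (hu : 0 ≤ u) :
    IntegrableOn (fun t : ℝ => (1 - Real.exp (-(t * u))) * t ^ (-(3/2) : ℝ)) (Ioi 0) := by
  have hmeas : ∀ s : Set ℝ, s ⊆ Ioi 0 → MeasurableSet s →
      AEStronglyMeasurable (fun t : ℝ => (1 - Real.exp (-(t * u))) * t ^ (-(3/2) : ℝ))
        (volume.restrict s) := by
    intro s hs hms
    have hcont : ContinuousOn (fun t : ℝ => (1 - Real.exp (-(t * u))) * t ^ (-(3/2) : ℝ)) s := by
      apply ContinuousOn.mul
      · exact (continuous_const.sub ((Real.continuous_exp.comp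
          ((continuous_id.mul continuous_const).neg)))).continuousOn
      · exact ContinuousOn.rpow_const continuousOn_id fun t hts => Or.inl (ne_of_gt (hs hts))
    exact hcont.aestronglyMeasurable hms
  have hbound : ∀ t ∈ Ioi (0:ℝ), 0 ≤ 1 - Real.exp (-(t * u)) ∧ 1 - Real.exp (-(t * u)) ≤ t * u := by
    intro t ht
    have ht0 : 0 < t := ht
    constructor
    · have : Real.exp (-(t * u)) ≤ 1 := Real.exp_le_one_iff.mpr (by nlinarith)
      linarith
    · have := Real.add_one_le_exp (-(t * u))
      nlinarith [Real.exp_pos (-(t*u))]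
  rw [show Ioi (0:ℝ) = Set.Ioc 0 1 ∪ Ioi 1 from (Ioc_union_Ioi_eq_Ioi zero_le_one).symm]
  apply IntegrableOn.union
  · -- on Ioc 0 1, dominate by u * t ^ (-1/2)
    have hint : IntegrableOn (fun t : ℝ => u * t ^ (-(1/2) : ℝ)) (Ioc 0 1) := by
      have h := intervalIntegral.intervalIntegrable_rpow' (r := (-(1/2):ℝ)) (a := 0) (b := 1)
        (by norm_num)
      rw [intervalIntegrable_iff_integrableOn_Ioc_of_le zero_le_one] at h
      exact h.const_mul u
    refine hint.mono' (hmeas _ Ioc_subset_Ioi_self measurableSet_Ioc) ?_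
    rw [ae_restrict_iff' measurableSet_Ioc]
    refine Filter.Eventually.of_forall fun t ht => ?_
    have ht0 : 0 < t := ht.1
    obtain ⟨h1, h2⟩ := hbound t ht0
    have hrp : (0:ℝ) < t ^ (-(3/2) : ℝ) := Real.rpow_pos_of_pos ht0 _
    rw [Real.norm_eq_abs, abs_of_nonneg (mul_nonneg h1 hrp.le)]
    have : t * u * t ^ (-(3/2) : ℝ) = u * t ^ (-(1/2) : ℝ) := by
      rw [show (-(1/2) : ℝ) = 1 + (-(3/2)) by norm_num, Real.rpow_add ht0, Real.rpow_one]
      ring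
    nlinarith [mul_le_mul_of_nonneg_right h2 hrp.le]
  · -- on Ioi 1, dominate by t ^ (-3/2)
    have hint : IntegrableOn (fun t : ℝ => t ^ (-(3/2) : ℝ)) (Ioi 1) :=
      integrableOn_Ioi_rpow_of_lt (by norm_num) one_pos
    refine hint.mono' (hmeas _ (Ioi_subset_Ioi zero_le_one) measurableSet_Ioi) ?_
    rw [ae_restrict_iff' measurableSet_Ioi]
    refine Filter.Eventually.of_forall fun t ht => ?_
    have ht0 : (0:ℝ) < t := lt_trans one_pos ht
    obtain ⟨h1, h2⟩ := hbound t ht0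
    have hrp : (0:ℝ) < t ^ (-(3/2) : ℝ) := Real.rpow_pos_of_pos ht0 _
    rw [Real.norm_eq_abs, abs_of_nonneg (mul_nonneg h1 hrp.le)]
    have hle1 : 1 - Real.exp (-(t * u)) ≤ 1 := by nlinarith [Real.exp_pos (-(t*u))]
    nlinarith

noncomputable def Cdist : ℝ := ∫ t in Ioi (0:ℝ), (1 - Real.exp (-(t * 1))) * t ^ (-(3/2) : ℝ)

lemma Cdist_pos : 0 < Cdist := by
  rw [Cdist]
  rw [MeasureTheory.integral_pos_iff_support_of_nonneg_ae]
  · have hsupp : Ioi (0:ℝ) ⊆ Function.support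
        (fun t : ℝ => (1 - Real.exp (-(t * 1))) * t ^ (-(3/2) : ℝ)) := by
      intro t ht
      have ht0 : (0:ℝ) < t := ht
      have h1 : Real.exp (-(t * 1)) < 1 := Real.exp_lt_one_iff.mpr (by linarith)
      have h2 : (0:ℝ) < t ^ (-(3/2) : ℝ) := Real.rpow_pos_of_pos ht0 _
      exact ne_of_gt (by nlinarith)
    have : (volume.restrict (Ioi (0:ℝ))) (Ioi 0) ≤ (volume.restrict (Ioi (0:ℝ)))
        (Function.support (fun t : ℝ => (1 - Real.exp (-(t * 1))) * t ^ (-(3/2) : ℝ))) :=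
      measure_mono hsupp
    rw [Measure.restrict_apply_self] at this
    rw [Real.volume_Ioi] at this
    exact lt_of_lt_of_le (by simp) this
  · filter_upwards [ae_restrict_mem measurableSet_Ioi] with t ht
    simp only [Pi.zero_apply]
    have ht0 : (0:ℝ) < t := ht
    have h1 : Real.exp (-(t * 1)) ≤ 1 := Real.exp_le_one_iff.mpr (by linarith)
    have h2 : (0:ℝ) ≤ t ^ (-(3/2) : ℝ) := (Real.rpow_pos_of_pos ht0 _).le
    nlinarith
  · exact gfun_integrable zero_le_one

lemma gfun_scale {u : ℝ} (hu : 0 < u) :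
    ∫ t in Ioi (0:ℝ), (1 - Real.exp (-(t * u))) * t ^ (-(3/2) : ℝ) = Real.sqrt u * Cdist := by
  set g : ℝ → ℝ := fun s => (1 - Real.exp (-(s * 1))) * s ^ (-(3/2) : ℝ) with hg
  have hcomp := integral_comp_mul_left_Ioi g 0 hu
  rw [mul_zero] at hcomp
  have hstep : ∫ t in Ioi (0:ℝ), (1 - Real.exp (-(t * u))) * t ^ (-(3/2) : ℝ)
      = ∫ t in Ioi (0:ℝ), u ^ ((3:ℝ)/2) * g (u * t) := by
    refine setIntegral_congr_fun measurableSet_Ioi fun t ht => ?_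
    have ht0 : (0:ℝ) < t := ht
    rw [hg]; simp only []
    rw [mul_one, Real.mul_rpow hu.le ht0.le]
    rw [show u * t = t * u by ring]
    rw [show u ^ ((3:ℝ)/2) * ((1 - Real.exp (-(t * u))) * (u ^ (-(3/2):ℝ) * t ^ (-(3/2):ℝ)))
        = (u ^ ((3:ℝ)/2) * u ^ (-(3/2):ℝ)) * ((1 - Real.exp (-(t * u))) * t ^ (-(3/2):ℝ)) by ring]
    rw [← Real.rpow_add hu]
    norm_num
  rw [hstep, MeasureTheory.integral_const_mul, hcomp, smul_eq_mul]
  rw [show u ^ ((3:ℝ)/2) * (u⁻¹ * ∫ x in Ioi (0:ℝ), g x)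
      = (u ^ ((3:ℝ)/2) * u⁻¹) * ∫ x in Ioi (0:ℝ), g x by ring]
  rw [← Real.rpow_neg_one u, ← Real.rpow_add hu]
  have hg2 : ∫ x in Ioi (0:ℝ), g x = Cdist := rfl
  rw [hg2, Real.sqrt_eq_rpow]
  norm_num

lemma cnd_dist {p n : ℕ} (x : Fin n → EuclideanSpace ℝ (Fin p)) (c : Fin n → ℝ)
    (hc : ∑ k, c k = 0) : ∑ k, ∑ l, c k * c l * ‖x k - x l‖ ≤ 0 := by
  have hC := Cdist_pos
  have key : ∀ v : EuclideanSpace ℝ (Fin p), ‖v‖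
      = Cdist⁻¹ * ∫ t in Ioi (0:ℝ), (1 - Real.exp (-(t * ‖v‖ ^ 2))) * t ^ (-(3/2) : ℝ) := by
    intro v
    rcases eq_or_lt_of_le (norm_nonneg v) with hv | hv
    · rw [← hv]
      norm_num
    · rw [gfun_scale (by positivity), Real.sqrt_sq (norm_nonneg v)]
      field_simp
  calc ∑ k, ∑ l, c k * c l * ‖x k - x l‖
      = Cdist⁻¹ * ∑ k, ∑ l, ∫ t in Ioi (0:ℝ),
          c k * c l * ((1 - Real.exp (-(t * ‖x k - x l‖ ^ 2))) * t ^ (-(3/2) : ℝ)) := by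
        rw [Finset.mul_sum]
        refine Finset.sum_congr rfl fun k _ => ?_
        rw [Finset.mul_sum]
        refine Finset.sum_congr rfl fun l _ => ?_
        rw [MeasureTheory.integral_const_mul]
        conv_lhs => rw [key (x k - x l)]
        ring
    _ = Cdist⁻¹ * ∫ t in Ioi (0:ℝ), ∑ k, ∑ l,
          c k * c l * ((1 - Real.exp (-(t * ‖x k - x l‖ ^ 2))) * t ^ (-(3/2) : ℝ)) := by
        congr 1
        rw [MeasureTheory.integral_finset_sum univ (fun k _ =>
          integrable_finset_sum univ (fun l _ =>
            ((gfun_integrable (sq_nonneg ‖x k - x l‖)).const_mul (c k * c l))))]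
        refine Finset.sum_congr rfl fun k _ => ?_
        rw [MeasureTheory.integral_finset_sum univ (fun l _ =>
          ((gfun_integrable (sq_nonneg ‖x k - x l‖)).const_mul (c k * c l)))]
    _ ≤ 0 := by
        apply mul_nonpos_of_nonneg_of_nonpos (inv_nonneg.mpr hC.le)
        apply MeasureTheory.integral_nonpos_of_ae
        filter_upwards [ae_restrict_mem measurableSet_Ioi] with t ht
        simp only [Pi.zero_apply]
        have ht0 : (0:ℝ) < t := ht
        have hgauss := gauss_qform_nonneg x c ht0.le
        have hr : (0:ℝ) ≤ t ^ (-(3/2) : ℝ) := (Real.rpow_pos_of_pos ht0 _).le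
        have hexpand : ∑ k, ∑ l, c k * c l * ((1 - Real.exp (-(t * ‖x k - x l‖ ^ 2))) * t ^ (-(3/2) : ℝ))
            = ((∑ k, c k) ^ 2 - ∑ k, ∑ l, c k * c l * Real.exp (-(t * ‖x k - x l‖ ^ 2)))
              * t ^ (-(3/2) : ℝ) := by
          rw [sq, Finset.sum_mul_sum, ← Finset.sum_sub_distrib, Finset.sum_mul]
          refine Finset.sum_congr rfl fun k _ => ?_
          rw [← Finset.sum_sub_distrib, Finset.sum_mul]
          refine Finset.sum_congr rfl fun l _ => ?_
          ring
        rw [hexpand, hc]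
        nlinarith

private lemma merge_sums {n : ℕ} (F G H K : Fin n → Fin n → ℝ) (α β γ : ℝ) :
    (∑ k, ∑ l, F k l) - α * (∑ k, ∑ l, G k l) - β * (∑ k, ∑ l, H k l)
      + γ * (∑ k, ∑ l, K k l)
    = ∑ k, ∑ l, (F k l - α * G k l - β * H k l + γ * K k l) := by
  rw [Finset.mul_sum, Finset.mul_sum, Finset.mul_sum, ← Finset.sum_sub_distrib,
    ← Finset.sum_sub_distrib, ← Finset.sum_add_distrib]
  refine Finset.sum_congr rfl fun k _ => ?_
  rw [Finset.mul_sum, Finset.mul_sum, Finset.mul_sum, ← Finset.sum_sub_distrib,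
    ← Finset.sum_sub_distrib, ← Finset.sum_add_distrib]

lemma qform_center {n : ℕ} (a A : Fin n → Fin n → ℝ)
    (hA : ∀ k l, A k l = a k l - (1 / (n : ℝ)) * ∑ j, a k j
        - (1 / (n : ℝ)) * ∑ i, a i l + (1 / (n : ℝ) ^ 2) * ∑ i, ∑ j, a i j)
    (v : Fin n → ℝ) :
    ∑ k, ∑ l, v k * v l * A k l
      = ∑ k, ∑ l, (v k - (∑ j, v j) / n) * (v l - (∑ j, v j) / n) * a k l := by
  set S := ∑ j, v j with hS
  set M := ∑ i, ∑ j, a i j with hM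
  set R := ∑ k, v k * ∑ j, a k j with hR
  set Cv := ∑ l, v l * ∑ i, a i l with hCv
  set T := ∑ k, ∑ l, v k * v l * a k l with hT
  have eq1 : R * S = ∑ k, ∑ l, (v k * ∑ j, a k j) * v l := Finset.sum_mul_sum _ _ _ _
  have eq2 : S * Cv = ∑ k, ∑ l, v k * (v l * ∑ i, a i l) := Finset.sum_mul_sum _ _ _ _
  have eq3 : S * S * M = ∑ k, ∑ l, v k * v l * M := by
    have h1 : S * S = ∑ k, ∑ l, v k * v l := Finset.sum_mul_sum _ _ _ _
    rw [h1, Finset.sum_mul]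
    exact Finset.sum_congr rfl fun k _ => Finset.sum_mul _ _ _
  have lhs_eq : ∑ k, ∑ l, v k * v l * A k l
      = T - (1 / (n:ℝ)) * (R * S) - (1 / (n:ℝ)) * (S * Cv) + (1 / (n:ℝ)^2) * (S * S * M) := by
    rw [eq1, eq2, eq3, hT, merge_sums]
    refine Finset.sum_congr rfl fun k _ => Finset.sum_congr rfl fun l _ => ?_
    rw [hA]; ring
  have eq4 : ∑ k, ∑ l, v k * a k l = R := by
    rw [hR]; exact Finset.sum_congr rfl fun k _ => (Finset.mul_sum _ _ _).symm
  have eq5 : ∑ k, ∑ l, v l * a k l = Cv := by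
    rw [Finset.sum_comm, hCv]
    exact Finset.sum_congr rfl fun l _ => (Finset.mul_sum _ _ _).symm
  have rhs_eq : ∑ k, ∑ l, (v k - S / n) * (v l - S / n) * a k l
      = T - (S / n) * R - (S / n) * Cv + (S / n)^2 * M := by
    rw [← eq4, ← eq5, hT, hM, merge_sums]
    refine Finset.sum_congr rfl fun k _ => Finset.sum_congr rfl fun l _ => ?_
    ring
  rw [lhs_eq, rhs_eq]
  ring

theorem empirical_squared_distance_covariance_nonneg
    (p q n : ℕ) (hp : 0 < p) (hq : 0 < q) (hn : 1 ≤ n)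
    (X : Fin n → EuclideanSpace ℝ (Fin p)) (Y : Fin n → EuclideanSpace ℝ (Fin q))
    (a b A B : Fin n → Fin n → ℝ)
    (ha : ∀ k l, a k l = ‖X k - X l‖)
    (hb : ∀ k l, b k l = ‖Y k - Y l‖)
    (hA : ∀ k l, A k l = a k l - (1 / (n : ℝ)) * ∑ j, a k j
        - (1 / (n : ℝ)) * ∑ i, a i l + (1 / (n : ℝ) ^ 2) * ∑ i, ∑ j, a i j)
    (hB : ∀ k l, B k l = b k l - (1 / (n : ℝ)) * ∑ j, b k j
        - (1 / (n : ℝ)) * ∑ i, b i l + (1 / (n : ℝ) ^ 2) * ∑ i, ∑ j, b i j) :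
    0 ≤ (1 / (n : ℝ) ^ 2) * ∑ k, ∑ l, A k l * B k l := by
  have hn0 : (n:ℝ) ≠ 0 := Nat.cast_ne_zero.mpr (by omega)
  have qform_nonpos : ∀ (m : ℕ) (Z : Fin n → EuclideanSpace ℝ (Fin m))
      (c C : Fin n → Fin n → ℝ), (∀ k l, c k l = ‖Z k - Z l‖) →
      (∀ k l, C k l = c k l - (1 / (n : ℝ)) * ∑ j, c k j
        - (1 / (n : ℝ)) * ∑ i, c i l + (1 / (n : ℝ) ^ 2) * ∑ i, ∑ j, c i j) →
      ∀ v : Fin n → ℝ, ∑ k, ∑ l, v k * v l * C k l ≤ 0 := by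
    intro m Z c C hc hC v
    rw [qform_center c C hC v]
    have hcsum : ∑ k : Fin n, (v k - (∑ j, v j) / n) = 0 := by
      rw [Finset.sum_sub_distrib, Finset.sum_const, Finset.card_univ, Fintype.card_fin,
        nsmul_eq_mul]
      field_simp
      ring
    have h := cnd_dist Z (fun k => v k - (∑ j, v j) / n) hcsum
    calc ∑ k, ∑ l, (v k - (∑ j, v j) / n) * (v l - (∑ j, v j) / n) * c k l
        = ∑ k, ∑ l, (v k - (∑ j, v j) / n) * (v l - (∑ j, v j) / n) * ‖Z k - Z l‖ :=
          Finset.sum_congr rfl fun k _ => Finset.sum_congr rfl fun l _ => by rw [hc]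
      _ ≤ 0 := h
  have hAq := qform_nonpos p X a A ha hA
  have hBq := qform_nonpos q Y b B hb hB
  have hbsymm : ∀ k l, b k l = b l k := fun k l => by rw [hb, hb, norm_sub_rev]
  have hBsymm : ∀ k l, B k l = B l k := by
    intro k l
    rw [hB, hB]
    have h1 : ∑ j, b k j = ∑ i, b i k := Finset.sum_congr rfl fun j _ => hbsymm k j
    have h2 : ∑ j, b l j = ∑ i, b i l := Finset.sum_congr rfl fun j _ => hbsymm l j
    rw [h1, h2, hbsymm k l]
    ring
  classical
  set Mb : Matrix (Fin n) (Fin n) ℝ := Matrix.of (fun k l => -(B k l)) with hMbdef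
  have hMb : Mb.PosSemidef := by
    rw [Matrix.posSemidef_iff_dotProduct_mulVec]
    constructor
    · ext k l
      simp only [Matrix.conjTranspose_apply, hMbdef, Matrix.of_apply, star_neg, star_trivial]
      rw [hBsymm k l]
    · intro x
      have hdot : dotProduct (star x) (Mb.mulVec x)
          = ∑ k, ∑ l, x k * x l * (-(B k l)) := by
        simp only [dotProduct, Matrix.mulVec, hMbdef, Matrix.of_apply, star_trivial,
          Pi.star_apply]
        refine Finset.sum_congr rfl fun k _ => ?_
        rw [Finset.mul_sum]
        exact Finset.sum_congr rfl fun l _ => by ring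
      rw [hdot]
      have : ∑ k, ∑ l, x k * x l * (-(B k l)) = -∑ k, ∑ l, x k * x l * B k l := by
        rw [← Finset.sum_neg_distrib]
        refine Finset.sum_congr rfl fun k _ => ?_
        rw [← Finset.sum_neg_distrib]
        exact Finset.sum_congr rfl fun l _ => by ring
      rw [this]
      linarith [hBq x]
  obtain ⟨Cm, hCm⟩ : ∃ Cm : Matrix (Fin n) (Fin n) ℝ, Mb = Cm.conjTranspose * Cm := by
    open scoped MatrixOrder in
    exact CStarAlgebra.nonneg_iff_eq_star_mul_self.mp hMb.nonneg
  have hent : ∀ k l, -(B k l) = ∑ r, Cm r k * Cm r l := by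
    intro k l
    calc -(B k l) = Mb k l := rfl
      _ = (Cm.conjTranspose * Cm) k l := by rw [hCm]
      _ = ∑ r, Cm r k * Cm r l := by
          simp [Matrix.mul_apply, Matrix.conjTranspose_apply]
  have hmain : 0 ≤ ∑ k, ∑ l, A k l * B k l := by
    have step1 : ∑ k, ∑ l, A k l * B k l
        = ∑ k, ∑ l, ∑ r, Cm r k * Cm r l * (-(A k l)) := by
      refine Finset.sum_congr rfl fun k _ => Finset.sum_congr rfl fun l _ => ?_
      rw [show A k l * B k l = (-(A k l)) * (-(B k l)) by ring, hent k l, Finset.mul_sum]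
      exact Finset.sum_congr rfl fun r _ => by ring
    have step2 : ∑ k, ∑ l, ∑ r, Cm r k * Cm r l * (-(A k l))
        = ∑ r, ∑ k, ∑ l, Cm r k * Cm r l * (-(A k l)) := by
      rw [show (∑ k, ∑ l, ∑ r, Cm r k * Cm r l * (-(A k l)))
          = ∑ k, ∑ r, ∑ l, Cm r k * Cm r l * (-(A k l)) from
        Finset.sum_congr rfl fun k _ => Finset.sum_comm]
      exact Finset.sum_comm
    rw [step1, step2]
    refine Finset.sum_nonneg fun r _ => ?_
    have : ∑ k, ∑ l, Cm r k * Cm r l * (-(A k l))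
        = -∑ k, ∑ l, Cm r k * Cm r l * A k l := by
      rw [← Finset.sum_neg_distrib]
      refine Finset.sum_congr rfl fun k _ => ?_
      rw [← Finset.sum_neg_distrib]
      exact Finset.sum_congr rfl fun l _ => by ring
    rw [this]
    linarith [hAq (fun k => Cm r k)]
  have h2 : (0:ℝ) ≤ 1 / (n:ℝ)^2 := by positivity
  exact mul_nonneg h2 hmain
end
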